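/- arXiv:1508.02559 — 5 statements merged into one kernel-verified Lean document; each statement's English description precedes it below -/
import Mathlib

section
/- For every finite simple graph G with maximum degree Δ ≥ 2, π(G) ≤ π_ℓ(G) ≤ ⌈12.92·(Δ − 1)²⌉. -/
open SimpleGraph

/-- A vertex colouring `φ` of `G` is nonrepetitive if for no path of `G` the sequence of
colours along its vertices is a repetition, i.e. of the form `l ++ l` with `l` nonempty. -/
def Nonrepetitive {V β : Type*} (G : SimpleGraph V) (φ : V → β) : Prop :=
  ∀ ⦃u v : V⦄ (p : G.Walk u v), p.IsPath →
    ∀ l : List β, l ≠ [] → p.support.map φ ≠ l ++ l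

/-- The Thue chromatic number of `G`: the least number of colours in a nonrepetitive
vertex colouring of `G`. -/
noncomputable def thueNumber {V : Type*} (G : SimpleGraph V) : ℕ :=
  sInf {k | ∃ φ : V → Fin k, Nonrepetitive G φ}

/-- The Thue choice number of `G`: the least `k` such that from any assignment of lists of
size at least `k` to the vertices one can choose a nonrepetitive vertex colouring. -/
noncomputable def thueChoiceNumber {V : Type*} (G : SimpleGraph V) : ℕ :=
  sInf {k | ∀ L : V → Finset ℕ, (∀ v, k ≤ (L v).card) →
    ∃ φ : V → ℕ, (∀ v, φ v ∈ L v) ∧ Nonrepetitive G φ}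

/-
Rosenfeld's counting argument. Fix lists of size `k ≥ 12.92 (Δ-1)²`, let `C(S)` be the set of
list colourings of `S ⊆ V` that are nonrepetitive on `S`, and `β = 5 (Δ-1)²`. By strong
induction on `S`, `|C(S)| ≥ β |C(S - v)|` for every `v ∈ S`. Indeed, of the at least
`k |C(S - v)|` extensions of colourings in `C(S - v)` to `v`, a bad one has a repetition along
a path with `2t` vertices through `v`, with `v` (after reversal) in the first half `F`. Such an
extension is determined by its restriction to `S \ F`, which lies in `C(S \ F)`, a set of size
at most `|C(S - v)| / β^(t-1)` by induction. Since at most `t Δ² (Δ-1)^(2t-3)` paths qualify,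
summing over `t` bounds the bad extensions by `25 Δ² / (16 (Δ-1)) · |C(S - v)|`, which leaves
at least `β |C(S - v)|` good ones. Hence `|C(V)| ≥ β^|V| > 0`.
-/

open Finset
open scoped Classical

variable {V : Type*} {G : SimpleGraph V} {S : Finset V} {v : V} {f g : V → ℕ}

theorem pow_card_mul_le_of_forall_erase {c : Finset V → ℕ} {β : ℕ}
    (h : ∀ R ⊆ S, ∀ v ∈ R, β * c (R.erase v) ≤ c R) {T : Finset V} (hT : T ⊆ S) :
    β ^ #T * c (S \ T) ≤ c S := by
  induction T using Finset.induction_on with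
  | empty => simp
  | insert x T hx ih =>
    have hxT : x ∈ S \ T := mem_sdiff.2 ⟨hT (mem_insert_self x T), hx⟩
    calc β ^ #(insert x T) * c (S \ insert x T) = β ^ #T * (β * c ((S \ T).erase x)) := by
          rw [card_insert_of_notMem hx, sdiff_insert, pow_succ, mul_assoc]
      _ ≤ β ^ #T * c (S \ T) := Nat.mul_le_mul_left _ (h _ sdiff_subset x hxT)
      _ ≤ c S := ih ((subset_insert x T).trans hT)

theorem sum_Icc_mul_inv_five_pow_le (N : ℕ) :
    ∑ t ∈ Icc 1 N, (t : ℝ) * (1 / 5) ^ (t - 1) ≤ 25 / 16 := by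
  have hs : HasSum (fun n : ℕ => (n : ℝ) * (1 / 5) ^ n) ((1 / 5) / (1 - 1 / 5) ^ 2) :=
    hasSum_coe_mul_geometric_of_norm_lt_one (by norm_num)
  calc ∑ t ∈ Icc 1 N, (t : ℝ) * (1 / 5) ^ (t - 1)
      = 5 * ∑ t ∈ Icc 1 N, (t : ℝ) * (1 / 5) ^ t := by
        rw [mul_sum]
        refine sum_congr rfl fun t ht => ?_
        obtain ⟨s, rfl⟩ := Nat.exists_eq_add_of_le' (mem_Icc.1 ht).1
        rw [Nat.add_sub_cancel, pow_succ]
        ring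
    _ ≤ 5 * ((1 / 5) / (1 - 1 / 5) ^ 2) := by
        gcongr
        exact hs.summable.sum_le_tsum _ (fun _ _ => by positivity) |>.trans hs.tsum_eq.le
    _ = 25 / 16 := by norm_num

theorem five_mul_sq_add_le {D : ℝ} (hD : 2 ≤ D) :
    5 * (D - 1) ^ 2 + 25 / 16 * (D ^ 2 / (D - 1)) ≤ 12.92 * (D - 1) ^ 2 := by
  have hD1 : 0 < D - 1 := by linarith
  have : 25 / 16 * (D ^ 2 / (D - 1)) ≤ 7.92 * (D - 1) ^ 2 := by
    rw [← mul_div_assoc, div_le_iff₀ hD1]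
    nlinarith [mul_pos hD1 hD1, mul_pos (mul_pos hD1 hD1) hD1]
  linarith

def NonrepetitiveOn (G : SimpleGraph V) (S : Finset V) (f : V → ℕ) : Prop :=
  ∀ u : List V, u.IsChain G.Adj → u.Nodup → (∀ x ∈ u, x ∈ S) →
    ∀ l : List ℕ, l ≠ [] → u.map f ≠ l ++ l

theorem NonrepetitiveOn.mono {T : Finset V} (hf : NonrepetitiveOn G S f) (hTS : T ⊆ S)
    (hfg : ∀ x ∈ T, f x = g x) : NonrepetitiveOn G T g := by
  intro u hchain hnodup hT l hl
  rw [← List.map_inj_left.2 fun x hx => hfg x (hT x hx)]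
  exact hf u hchain hnodup (fun x hx => hTS (hT x hx)) l hl

theorem Nonrepetitive.of_comp {α β : Type*} {φ : V → α} (g : α → β)
    (h : Nonrepetitive G (g ∘ φ)) : Nonrepetitive G φ := by
  intro u w p hp l hl hrep
  refine h p hp (l.map g) (by simpa using hl) ?_
  rw [← List.map_map, hrep, List.map_append]

def ThueChoosable (G : SimpleGraph V) (k : ℕ) : Prop :=
  ∀ L : V → Finset ℕ, (∀ v, k ≤ (L v).card) →
    ∃ φ : V → ℕ, (∀ v, φ v ∈ L v) ∧ Nonrepetitive G φ

theorem thueChoiceNumber_le {k : ℕ} (h : ThueChoosable G k) : thueChoiceNumber G ≤ k :=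
  Nat.sInf_le h

theorem thueNumber_le_thueChoiceNumber {k : ℕ} (h : ThueChoosable G k) :
    thueNumber G ≤ thueChoiceNumber G := by
  obtain ⟨φ, hφL, hφ⟩ := Nat.sInf_mem (s := {k | ThueChoosable G k}) ⟨k, h⟩
    (fun _ => range (thueChoiceNumber G)) (fun _ => (card_range _).ge)
  have hlt : ∀ x, φ x < thueChoiceNumber G := fun x => mem_range.1 (hφL x)
  exact Nat.sInf_le ⟨fun x => ⟨φ x, hlt x⟩, Nonrepetitive.of_comp Fin.val hφ⟩

section colorings

variable [Fintype V]

/-- Colourings from the lists on `S`; vertices off `S` get the dummy colour `0`, so that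
colourings of different sets live in the same type `V → ℕ`. -/
noncomputable def listColorings (L : V → Finset ℕ) (S : Finset V) : Finset (V → ℕ) :=
  Fintype.piFinset fun x => if x ∈ S then L x else {0}

noncomputable def nonrepColorings (G : SimpleGraph V) (L : V → Finset ℕ) (S : Finset V) :
    Finset (V → ℕ) :=
  {f ∈ listColorings L S | NonrepetitiveOn G S f}

noncomputable def extensions (G : SimpleGraph V) (L : V → Finset ℕ) (S : Finset V) (v : V) :
    Finset (V → ℕ) :=
  {f ∈ listColorings L S | NonrepetitiveOn G (S.erase v) f}

variable {L : V → Finset ℕ}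

theorem mem_listColorings :
    f ∈ listColorings L S ↔ (∀ x ∈ S, f x ∈ L x) ∧ ∀ x ∉ S, f x = 0 := by
  simp only [listColorings, Fintype.mem_piFinset]
  refine ⟨fun h => ⟨fun x hx => by simpa [hx] using h x, fun x hx => by simpa [hx] using h x⟩,
    fun h x => ?_⟩
  by_cases hx : x ∈ S <;> simp [hx, h.1 x, h.2 x]

theorem NonrepetitiveOn.nonrepetitive (hf : NonrepetitiveOn G univ f) : Nonrepetitive G f :=
  fun _ _ p hp => hf p.support p.isChain_adj_support hp.support_nodup fun x _ => mem_univ x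

theorem card_nonrepColorings_empty : #(nonrepColorings G L ∅) = 1 := by
  rw [card_eq_one]
  refine ⟨0, eq_singleton_iff_unique_mem.2 ⟨mem_filter.2 ⟨?_, ?_⟩, fun f hf => ?_⟩⟩
  · simp [mem_listColorings]
  · intro u _ _ hu l hl hrep
    obtain rfl : u = [] := List.eq_nil_iff_forall_not_mem.2 fun x hx => by simpa using hu x hx
    exact hl (List.append_eq_nil_iff.1 hrep.symm).1
  · exact funext fun x => (mem_listColorings.1 (mem_filter.1 hf).1).2 x (notMem_empty x)

theorem card_mul_card_le_card_extensions (hv : v ∈ S) :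
    #(nonrepColorings G L (S.erase v)) * #(L v) ≤ #(extensions G L S v) := by
  rw [← card_product]
  refine card_le_card_of_injOn (fun p => Function.update p.1 v p.2) ?_ ?_
  · rintro ⟨ψ, c⟩ hp
    simp only [coe_product, Set.mem_prod, mem_coe, nonrepColorings, mem_filter,
      mem_listColorings] at hp
    obtain ⟨⟨⟨hψL, hψ0⟩, hψ⟩, hc⟩ := hp
    refine mem_filter.2 ⟨mem_listColorings.2 ⟨fun x hx => ?_, fun x hx => ?_⟩,
      hψ.mono subset_rfl fun x hx => (Function.update_of_ne (ne_of_mem_erase hx) _ _).symm⟩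
    · rcases eq_or_ne x v with rfl | hxv
      · simpa using hc
      · simpa [hxv] using hψL x (mem_erase.2 ⟨hxv, hx⟩)
    · dsimp only
      rw [Function.update_of_ne (ne_of_mem_of_not_mem hv hx).symm]
      exact hψ0 x fun h => hx (mem_of_mem_erase h)
  · rintro ⟨ψ, c⟩ hp ⟨ψ', c'⟩ hp' h
    simp only [coe_product, Set.mem_prod, mem_coe, nonrepColorings, mem_filter,
      mem_listColorings] at hp hp'
    -- both vanish at `v`, so each is recovered by resetting `v` to `0`
    have hψ : ψ = ψ' := by
      rw [← Function.update_eq_self v ψ, ← Function.update_eq_self v ψ',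
        hp.1.1.2 v (notMem_erase v S), hp'.1.1.2 v (notMem_erase v S),
        ← Function.update_idem c, ← Function.update_idem c' 0 ψ']
      exact congrArg (Function.update · v 0) h
    simpa [hψ] using congrFun h v

/-- Colourings in which `a` and `b` carry the same colour sequence are determined by their
restriction to `S \ a`; that restriction is nonrepetitive as soon as `v ∈ a`. -/
theorem card_filter_map_eq_le {a b : List V} (hva : v ∈ a)
    (hb : ∀ x ∈ b, x ∈ S ∧ x ∉ a) :
    #{f ∈ extensions G L S v | a.map f = b.map f} ≤
      #(nonrepColorings G L (S \ a.toFinset)) := by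
  have hsub : S \ a.toFinset ⊆ S.erase v := fun x hx => by
    simp only [mem_sdiff, List.mem_toFinset] at hx
    exact mem_erase.2 ⟨ne_of_mem_of_not_mem hva hx.2 |>.symm, hx.1⟩
  refine card_le_card_of_injOn (fun f => (S \ a.toFinset).piecewise f 0) ?_ ?_
  · intro f hf
    simp only [mem_coe, extensions, mem_filter, mem_listColorings] at hf
    obtain ⟨⟨⟨hfL, -⟩, hf⟩, -⟩ := hf
    refine mem_filter.2 ⟨mem_listColorings.2 ⟨fun x hx => ?_, fun x hx => ?_⟩,
      hf.mono hsub fun x hx => (piecewise_eq_of_mem _ _ _ hx).symm⟩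
    · dsimp only
      rw [piecewise_eq_of_mem _ _ _ hx]
      exact hfL x (mem_sdiff.1 hx).1
    · dsimp only
      rw [piecewise_eq_of_notMem _ _ _ hx, Pi.zero_apply]
  · intro f hf g hg hfg
    simp only [mem_coe, extensions, mem_filter, mem_listColorings] at hf hg
    have hrest : ∀ x ∈ S \ a.toFinset, f x = g x := fun x hx => by
      simpa [piecewise_eq_of_mem _ _ _ hx] using congrFun hfg x
    have ha : ∀ x ∈ a, f x = g x := by
      refine List.map_inj_left.1 ?_
      rw [hf.2, hg.2, List.map_inj_left]
      exact fun x hx => hrest x (by simpa using hb x hx)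
    funext x
    by_cases hxS : x ∈ S
    · by_cases hxa : x ∈ a
      · exact ha x hxa
      · exact hrest x (by simp [hxS, hxa])
    · rw [hf.1.1.2 x hxS, hg.1.1.2 x hxS]

end colorings

section paths

variable [Fintype V] [DecidableRel G.Adj] {k : ℕ} {L : V → Finset ℕ}

/-- The paths of `G` with `s` edges starting at `x`, as vertex lists. -/
noncomputable def pathsFrom (G : SimpleGraph V) [DecidableRel G.Adj] (x : V) :
    ℕ → Finset (List V)
  | 0 => {[x]}
  | s + 1 => (G.neighborFinset x).biUnion fun y =>
      {u ∈ pathsFrom G y s | x ∉ u}.image (x :: ·)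

theorem mem_pathsFrom {s : ℕ} {x : V} {u : List V} :
    u ∈ pathsFrom G x s ↔
      u.length = s + 1 ∧ u.IsChain G.Adj ∧ u.Nodup ∧ u.head? = some x := by
  induction s generalizing x u with
  | zero =>
    constructor
    · rintro hu
      rw [pathsFrom, mem_singleton] at hu
      subst hu
      exact ⟨rfl, List.isChain_singleton x, List.nodup_singleton x, rfl⟩
    · rintro ⟨hlen, -, -, hhead⟩
      obtain ⟨a, rfl⟩ := List.length_eq_one_iff.1 hlen
      simp_all [pathsFrom]
  | succ s ih =>
    simp only [pathsFrom, mem_biUnion, mem_image, mem_filter, mem_neighborFinset, ih]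
    constructor
    · rintro ⟨y, hxy, l, ⟨⟨hlen, hchain, hnodup, hhead⟩, hxl⟩, rfl⟩
      refine ⟨by simp [hlen], List.isChain_cons.2 ⟨by simpa [hhead] using hxy, hchain⟩,
        List.nodup_cons.2 ⟨hxl, hnodup⟩, rfl⟩
    · rintro ⟨hlen, hchain, hnodup, hhead⟩
      obtain ⟨a, l, rfl⟩ := List.exists_cons_of_length_eq_add_one hlen
      obtain rfl : a = x := by simpa using hhead
      obtain ⟨b, l', rfl⟩ := List.exists_cons_of_length_eq_add_one (by simpa using hlen)
      rw [List.isChain_cons_cons] at hchain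
      rw [List.nodup_cons] at hnodup
      exact ⟨b, hchain.1, b :: l',
        ⟨⟨by simpa using hlen, hchain.2, hnodup.2, rfl⟩, hnodup.1⟩, rfl⟩

theorem head_mem_of_mem_pathsFrom {s : ℕ} {x : V} {u : List V} (hu : u ∈ pathsFrom G x s) :
    x ∈ u :=
  List.mem_of_mem_head? (mem_pathsFrom.1 hu).2.2.2

theorem card_filter_pathsFrom_notMem_le {w x : V} (hwx : G.Adj w x) (s : ℕ) :
    #{u ∈ pathsFrom G x s | w ∉ u} ≤ (G.maxDegree - 1) ^ s := by
  induction s generalizing w x with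
  | zero => exact (card_filter_le _ _).trans (by simp [pathsFrom])
  | succ s ih =>
    have hsub : {u ∈ pathsFrom G x (s + 1) | w ∉ u} ⊆ ((G.neighborFinset x).erase w).biUnion
        fun y => {u ∈ pathsFrom G y s | x ∉ u}.image (x :: ·) := by
      simp only [pathsFrom, subset_iff, mem_filter, mem_biUnion, mem_image, mem_erase]
      rintro _ ⟨⟨y, hy, l, hl, rfl⟩, hw⟩
      refine ⟨y, ⟨?_, hy⟩, l, hl, rfl⟩
      rintro rfl
      exact hw (List.mem_cons_of_mem _ (head_mem_of_mem_pathsFrom hl.1))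
    have hdeg : #((G.neighborFinset x).erase w) ≤ G.maxDegree - 1 := by
      rw [card_erase_of_mem (by simpa using hwx.symm), card_neighborFinset_eq_degree]
      exact Nat.sub_le_sub_right (G.degree_le_maxDegree x) 1
    calc #{u ∈ pathsFrom G x (s + 1) | w ∉ u}
        ≤ ∑ y ∈ (G.neighborFinset x).erase w,
            #({u ∈ pathsFrom G y s | x ∉ u}.image (x :: ·)) :=
          (card_le_card hsub).trans card_biUnion_le
      _ ≤ ∑ _y ∈ (G.neighborFinset x).erase w, (G.maxDegree - 1) ^ s :=
          sum_le_sum fun y hy => card_image_le.trans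
            (ih (by simpa using (mem_erase.1 hy).2))
      _ ≤ (G.maxDegree - 1) ^ (s + 1) := by
          rw [sum_const, smul_eq_mul, pow_succ']
          exact Nat.mul_le_mul_right _ hdeg

theorem card_pathsFrom_mul_le (x : V) (s : ℕ) :
    #(pathsFrom G x s) * (G.maxDegree - 1) ≤ G.maxDegree * (G.maxDegree - 1) ^ s := by
  cases s with
  | zero => simp [pathsFrom]
  | succ s =>
    calc #(pathsFrom G x (s + 1)) * (G.maxDegree - 1)
        ≤ (∑ y ∈ G.neighborFinset x, #({u ∈ pathsFrom G y s | x ∉ u}.image (x :: ·)))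
            * (G.maxDegree - 1) := Nat.mul_le_mul_right _ card_biUnion_le
      _ ≤ (∑ _y ∈ G.neighborFinset x, (G.maxDegree - 1) ^ s) * (G.maxDegree - 1) :=
          Nat.mul_le_mul_right _ <| sum_le_sum fun y hy => card_image_le.trans
            (card_filter_pathsFrom_notMem_le (by simpa using hy) s)
      _ ≤ G.maxDegree * (G.maxDegree - 1) ^ (s + 1) := by
          rw [sum_const, smul_eq_mul, card_neighborFinset_eq_degree, pow_succ, ← mul_assoc]
          exact Nat.mul_le_mul_right _ (Nat.mul_le_mul_right _ (G.degree_le_maxDegree x))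

theorem reverse_take_mem_pathsFrom {u : List V} (hchain : u.IsChain G.Adj) (hnodup : u.Nodup)
    {i : ℕ} (hi : i < u.length) : (u.take (i + 1)).reverse ∈ pathsFrom G u[i] i := by
  refine mem_pathsFrom.2 ⟨by rw [List.length_reverse, List.length_take]; omega, ?_,
    List.nodup_reverse.2 (hnodup.sublist (List.take_sublist _ _)), ?_⟩
  · exact List.isChain_reverse.2 ((hchain.take (i + 1)).imp fun _ _ h => h.symm)
  · rw [List.head?_reverse, List.getLast?_take, if_neg (by omega), Nat.add_sub_cancel,
      List.getElem?_eq_getElem hi]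
    rfl

theorem drop_mem_pathsFrom {u : List V} (hchain : u.IsChain G.Adj) (hnodup : u.Nodup)
    {i : ℕ} (hi : i < u.length) : u.drop i ∈ pathsFrom G u[i] (u.length - 1 - i) := by
  refine mem_pathsFrom.2 ⟨by rw [List.length_drop]; omega, hchain.drop i,
    hnodup.sublist (List.drop_sublist _ _), ?_⟩
  rw [List.head?_drop, List.getElem?_eq_getElem hi]

/-- The paths of `G` inside `S` with `2t` vertices and `v` among the first `t`: the candidates
for a repetition created by colouring `v`. -/
noncomputable def repetitionPaths (G : SimpleGraph V) [DecidableRel G.Adj] (S : Finset V) (v : V)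
    (t : ℕ) : Finset (List V) :=
  {u ∈ univ.biUnion fun x => pathsFrom G x (2 * t - 1) |
    (∀ x ∈ u, x ∈ S) ∧ v ∈ u.take t}

variable {t : ℕ} {u : List V}

theorem mem_repetitionPaths : u ∈ repetitionPaths G S v t ↔
    u.length = 2 * t ∧ u.IsChain G.Adj ∧ u.Nodup ∧ (∀ x ∈ u, x ∈ S) ∧
      v ∈ u.take t := by
  simp only [repetitionPaths, mem_filter, mem_biUnion, mem_univ, true_and, mem_pathsFrom]
  constructor
  · rintro ⟨⟨x, hlen, hchain, hnodup, -⟩, hS, hv⟩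
    have : t ≠ 0 := by rintro rfl; simp at hv
    exact ⟨by omega, hchain, hnodup, hS, hv⟩
  · rintro ⟨hlen, hchain, hnodup, hS, hv⟩
    obtain ⟨a, l, rfl⟩ :=
      List.exists_cons_of_ne_nil (List.ne_nil_of_mem (List.mem_of_mem_take hv))
    have : t ≠ 0 := by rintro rfl; simp at hv
    exact ⟨⟨a, by rw [hlen]; omega, hchain, hnodup, rfl⟩, hS, hv⟩

/-- Split a path at the position `i < t` of `v` into two paths starting at `v`. -/
theorem card_repetitionPaths_le :
    #(repetitionPaths G S v t) ≤
      ∑ i ∈ range t, #(pathsFrom G v i) * #(pathsFrom G v (2 * t - 1 - i)) := by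
  have hsub : repetitionPaths G S v t ⊆ (range t).biUnion fun i =>
      (pathsFrom G v i ×ˢ pathsFrom G v (2 * t - 1 - i)).image
        fun p => p.1.reverse ++ p.2.tail := by
    intro u hu
    obtain ⟨hlen, hchain, hnodup, -, hv⟩ := mem_repetitionPaths.1 hu
    obtain ⟨i, hi, rfl⟩ := List.mem_iff_getElem.1 hv
    simp only [List.length_take, lt_min_iff] at hi
    simp only [mem_biUnion, mem_range, mem_image, mem_product]
    refine ⟨i, hi.1, ((u.take (i + 1)).reverse, u.drop i), ⟨?_, ?_⟩, ?_⟩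
    · simpa using reverse_take_mem_pathsFrom hchain hnodup hi.2
    · simpa [hlen] using drop_mem_pathsFrom hchain hnodup hi.2
    · simp [List.tail_drop]
  calc #(repetitionPaths G S v t) ≤ _ := card_le_card hsub
    _ ≤ _ := card_biUnion_le
    _ ≤ _ := sum_le_sum fun i _ => card_image_le.trans (card_product _ _).le

theorem card_repetitionPaths_mul_le :
    #(repetitionPaths G S v t) * (G.maxDegree - 1) ^ 2 ≤
      t * G.maxDegree ^ 2 * (G.maxDegree - 1) ^ (2 * t - 1) := by
  set Δ := G.maxDegree
  calc #(repetitionPaths G S v t) * (Δ - 1) ^ 2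
      ≤ ∑ i ∈ range t, (#(pathsFrom G v i) * (Δ - 1)) *
          (#(pathsFrom G v (2 * t - 1 - i)) * (Δ - 1)) := by
        refine (Nat.mul_le_mul_right _ card_repetitionPaths_le).trans_eq ?_
        rw [sum_mul]
        exact sum_congr rfl fun _ _ => by ring
    _ ≤ ∑ i ∈ range t, (Δ * (Δ - 1) ^ i) * (Δ * (Δ - 1) ^ (2 * t - 1 - i)) :=
        sum_le_sum fun i _ => Nat.mul_le_mul (card_pathsFrom_mul_le v i)
          (card_pathsFrom_mul_le v _)
    _ = ∑ _i ∈ range t, Δ ^ 2 * (Δ - 1) ^ (2 * t - 1) := sum_congr rfl fun i hi => by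
        have := mem_range.1 hi
        rw [mul_mul_mul_comm, ← pow_add, ← sq, Nat.add_sub_of_le (by omega)]
    _ = t * Δ ^ 2 * (Δ - 1) ^ (2 * t - 1) := by rw [sum_const, card_range, smul_eq_mul, mul_assoc]

/-- Reversing the repeated path if necessary puts `v` in its first half. -/
theorem exists_repetitionPaths_of_not_nonrepetitiveOn (hf : NonrepetitiveOn G (S.erase v) f)
    (hS : ¬ NonrepetitiveOn G S f) :
    ∃ t ∈ Icc 1 (Fintype.card V), ∃ u ∈ repetitionPaths G S v t,
      (u.take t).map f = (u.drop t).map f := by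
  simp only [NonrepetitiveOn, not_forall, not_not] at hS
  obtain ⟨u, hchain, hnodup, hSu, l, hl, hrep⟩ := hS
  have hvu : v ∈ u := by
    by_contra hvu
    exact hf u hchain hnodup (fun x hx => mem_erase.2 ⟨ne_of_mem_of_not_mem hx hvu, hSu x hx⟩)
      l hl hrep
  have hlen : u.length = 2 * l.length := by simpa [two_mul] using congrArg List.length hrep
  wlog hvt : v ∈ u.take l.length generalizing u l
  · refine this u.reverse (List.isChain_reverse.2 (hchain.imp fun _ _ h => h.symm))
      (List.nodup_reverse.2 hnodup) (by simpa using hSu) l.reverse (by simpa using hl)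
      (by rw [List.map_reverse, hrep, List.reverse_append]) (List.mem_reverse.2 hvu)
      (by simpa using hlen) ?_
    rw [List.length_reverse, List.take_reverse, List.mem_reverse, hlen,
      show 2 * l.length - l.length = l.length by omega]
    rw [← List.take_append_drop l.length u, List.mem_append] at hvu
    exact hvu.resolve_left hvt
  refine ⟨l.length, mem_Icc.2 ⟨List.length_pos_of_ne_nil hl, ?_⟩, u,
    mem_repetitionPaths.2 ⟨hlen, hchain, hnodup, hSu, hvt⟩, ?_⟩
  · have := hnodup.length_le_card
    omega
  · rw [List.map_take, List.map_drop, hrep, List.take_left, List.drop_left]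

theorem card_filter_map_eq_mul_pow_le {β : ℕ}
    (ih : ∀ T ⊆ S.erase v,
      β ^ #T * #(nonrepColorings G L (S.erase v \ T)) ≤ #(nonrepColorings G L (S.erase v)))
    (hu : u ∈ repetitionPaths G S v t) :
    #{f ∈ extensions G L S v | (u.take t).map f = (u.drop t).map f} * β ^ (t - 1) ≤
      #(nonrepColorings G L (S.erase v)) := by
  obtain ⟨hlen, -, hnodup, hSu, hvt⟩ := mem_repetitionPaths.1 hu
  set F := (u.take t).toFinset
  have hvF : v ∈ F := List.mem_toFinset.2 hvt
  have hb : ∀ x ∈ u.drop t, x ∈ S ∧ x ∉ u.take t := fun x hx =>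
    ⟨hSu x (List.mem_of_mem_drop hx), fun h => List.disjoint_take_drop hnodup le_rfl h hx⟩
  have hcard : #(F.erase v) = t - 1 := by
    rw [card_erase_of_mem hvF,
      List.toFinset_card_of_nodup (hnodup.sublist (List.take_sublist _ _)), List.length_take]
    omega
  have hdiff : S.erase v \ F.erase v = S \ F := by
    ext x
    by_cases hx : x = v <;> simp [hx, hvF]
  have hFS : F.erase v ⊆ S.erase v :=
    erase_subset_erase v fun x hx => hSu x (List.mem_of_mem_take (List.mem_toFinset.1 hx))
  calc #{f ∈ extensions G L S v | (u.take t).map f = (u.drop t).map f} * β ^ (t - 1)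
      ≤ #(nonrepColorings G L (S \ F)) * β ^ (t - 1) :=
        Nat.mul_le_mul_right _ (card_filter_map_eq_le hvt hb)
    _ ≤ #(nonrepColorings G L (S.erase v)) := by
        simpa [mul_comm, hcard, hdiff] using ih (F.erase v) hFS

/-- Each of the at most `t Δ² (Δ-1)^(2t-3)` candidate paths carries at most
`|C(S - v)| / (5 (Δ-1)²)^(t-1)` repetitions. -/
theorem card_filter_repetition_mul_le (ht : 1 ≤ t)
    (ih : ∀ T ⊆ S.erase v, (5 * (G.maxDegree - 1) ^ 2) ^ #T *
      #(nonrepColorings G L (S.erase v \ T)) ≤ #(nonrepColorings G L (S.erase v)))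
    (hΔ : 2 ≤ G.maxDegree) :
    #{f ∈ extensions G L S v |
        ∃ u ∈ repetitionPaths G S v t, (u.take t).map f = (u.drop t).map f} *
        5 ^ (t - 1) * (G.maxDegree - 1) ≤
      t * G.maxDegree ^ 2 * #(nonrepColorings G L (S.erase v)) := by
  set Δ := G.maxDegree
  set m := #(nonrepColorings G L (S.erase v))
  set B := {f ∈ extensions G L S v | ∃ u ∈ repetitionPaths G S v t,
    (u.take t).map f = (u.drop t).map f}
  have hB : #B * (5 * (Δ - 1) ^ 2) ^ (t - 1) ≤ #(repetitionPaths G S v t) * m := by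
    have hsub : B ⊆ (repetitionPaths G S v t).biUnion
        fun u => {f ∈ extensions G L S v | (u.take t).map f = (u.drop t).map f} := by
      intro f hf
      obtain ⟨hf, u, hu, hrep⟩ := mem_filter.1 hf
      exact mem_biUnion.2 ⟨u, hu, mem_filter.2 ⟨hf, hrep⟩⟩
    calc #B * (5 * (Δ - 1) ^ 2) ^ (t - 1)
        ≤ (∑ u ∈ repetitionPaths G S v t,
            #{f ∈ extensions G L S v | (u.take t).map f = (u.drop t).map f}) *
              (5 * (Δ - 1) ^ 2) ^ (t - 1) :=
          Nat.mul_le_mul_right _ ((card_le_card hsub).trans card_biUnion_le)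
      _ ≤ ∑ _u ∈ repetitionPaths G S v t, m := by
          rw [sum_mul]
          exact sum_le_sum fun u hu => card_filter_map_eq_mul_pow_le ih hu
      _ = #(repetitionPaths G S v t) * m := by rw [sum_const, smul_eq_mul]
  obtain ⟨s, rfl⟩ := Nat.exists_eq_add_of_le' ht
  have hpos : 0 < (Δ - 1) ^ (2 * s + 1) := pow_pos (by omega) _
  refine Nat.le_of_mul_le_mul_right ?_ hpos
  calc #B * 5 ^ (s + 1 - 1) * (Δ - 1) * (Δ - 1) ^ (2 * s + 1)
      = #B * (5 * (Δ - 1) ^ 2) ^ (s + 1 - 1) * (Δ - 1) ^ 2 := by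
        rw [Nat.add_sub_cancel]
        ring
    _ ≤ #(repetitionPaths G S v (s + 1)) * m * (Δ - 1) ^ 2 := Nat.mul_le_mul_right _ hB
    _ = #(repetitionPaths G S v (s + 1)) * (Δ - 1) ^ 2 * m := by ring
    _ ≤ (s + 1) * Δ ^ 2 * (Δ - 1) ^ (2 * (s + 1) - 1) * m :=
        Nat.mul_le_mul_right _ card_repetitionPaths_mul_le
    _ = (s + 1) * Δ ^ 2 * m * (Δ - 1) ^ (2 * s + 1) := by
        rw [show 2 * (s + 1) - 1 = 2 * s + 1 by omega]
        ring

theorem card_filter_not_nonrepetitiveOn_le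
    (ih : ∀ T ⊆ S.erase v, (5 * (G.maxDegree - 1) ^ 2) ^ #T *
      #(nonrepColorings G L (S.erase v \ T)) ≤ #(nonrepColorings G L (S.erase v)))
    (hΔ : 2 ≤ G.maxDegree) :
    (#{f ∈ extensions G L S v | ¬ NonrepetitiveOn G S f} : ℝ) ≤
      #(nonrepColorings G L (S.erase v)) * (25 / 16 * (G.maxDegree ^ 2 / (G.maxDegree - 1))) := by
  set Δ := G.maxDegree with hΔdef
  set m := #(nonrepColorings G L (S.erase v)) with hmdef
  have hΔ1 : (0 : ℝ) < Δ - 1 := by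
    have : (2 : ℝ) ≤ Δ := by exact_mod_cast hΔ
    linarith
  have hcast : ((Δ - 1 : ℕ) : ℝ) = Δ - 1 := by
    rw [Nat.cast_sub (by omega), Nat.cast_one]
  have hsub : {f ∈ extensions G L S v | ¬ NonrepetitiveOn G S f} ⊆
      (Icc 1 (Fintype.card V)).biUnion fun t => {f ∈ extensions G L S v |
        ∃ u ∈ repetitionPaths G S v t, (u.take t).map f = (u.drop t).map f} := by
    intro f hf
    obtain ⟨hfe, hbad⟩ := mem_filter.1 hf
    obtain ⟨t, ht, u, hu, hrep⟩ :=
      exists_repetitionPaths_of_not_nonrepetitiveOn (mem_filter.1 hfe).2 hbad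
    exact mem_biUnion.2 ⟨t, ht, mem_filter.2 ⟨hfe, u, hu, hrep⟩⟩
  have hterm : ∀ t ∈ Icc 1 (Fintype.card V), (#{f ∈ extensions G L S v |
      ∃ u ∈ repetitionPaths G S v t, (u.take t).map f = (u.drop t).map f} : ℝ) ≤
        (m : ℝ) * ((Δ : ℝ) ^ 2 / ((Δ : ℝ) - 1)) * ((t : ℝ) * (1 / 5) ^ (t - 1)) := by
    intro t ht
    have h := card_filter_repetition_mul_le (mem_Icc.1 ht).1 ih hΔ
    rw [← hΔdef, ← hmdef, ← Nat.cast_le (α := ℝ)] at h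
    push_cast [hcast] at h
    rw [one_div_pow, mul_div_assoc', mul_div_assoc', div_mul_div_comm,
      le_div_iff₀ (by positivity)]
    linarith
  calc (#{f ∈ extensions G L S v | ¬ NonrepetitiveOn G S f} : ℝ)
      ≤ ∑ t ∈ Icc 1 (Fintype.card V), (#{f ∈ extensions G L S v |
          ∃ u ∈ repetitionPaths G S v t, (u.take t).map f = (u.drop t).map f} : ℝ) := by
        exact_mod_cast (card_le_card hsub).trans card_biUnion_le
    _ ≤ ∑ t ∈ Icc 1 (Fintype.card V),
          (m : ℝ) * ((Δ : ℝ) ^ 2 / ((Δ : ℝ) - 1)) * ((t : ℝ) * (1 / 5) ^ (t - 1)) :=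
        sum_le_sum hterm
    _ ≤ (m : ℝ) * ((Δ : ℝ) ^ 2 / ((Δ : ℝ) - 1)) * (25 / 16) := by
        rw [← mul_sum]
        gcongr
        exact sum_Icc_mul_inv_five_pow_le _
    _ = (m : ℝ) * (25 / 16 * ((Δ : ℝ) ^ 2 / ((Δ : ℝ) - 1))) := by ring

theorem mul_card_nonrepColorings_erase_le_of_forall_subset (hΔ : 2 ≤ G.maxDegree)
    (hL : ∀ x, k ≤ #(L x)) (hk : 12.92 * ((G.maxDegree : ℝ) - 1) ^ 2 ≤ k) (hv : v ∈ S)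
    (ih : ∀ T ⊆ S.erase v, (5 * (G.maxDegree - 1) ^ 2) ^ #T *
      #(nonrepColorings G L (S.erase v \ T)) ≤ #(nonrepColorings G L (S.erase v))) :
    5 * (G.maxDegree - 1) ^ 2 * #(nonrepColorings G L (S.erase v)) ≤
      #(nonrepColorings G L S) := by
  have hgood : {f ∈ extensions G L S v | NonrepetitiveOn G S f} ⊆ nonrepColorings G L S :=
    filter_subset_filter _ (filter_subset _ _)
  have hext : (#(nonrepColorings G L (S.erase v)) : ℝ) * k ≤
      #{f ∈ extensions G L S v | NonrepetitiveOn G S f} +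
        #{f ∈ extensions G L S v | ¬ NonrepetitiveOn G S f} := by
    rw [← Nat.cast_add, card_filter_add_card_filter_not]
    exact_mod_cast (Nat.mul_le_mul_left _ (hL v)).trans (card_mul_card_le_card_extensions hv)
  have hbad := card_filter_not_nonrepetitiveOn_le ih hΔ
  have hβ := (five_mul_sq_add_le (D := G.maxDegree) (by exact_mod_cast hΔ)).trans hk
  have hcast : ((G.maxDegree - 1 : ℕ) : ℝ) = G.maxDegree - 1 := by
    rw [Nat.cast_sub (by omega), Nat.cast_one]
  rw [← Nat.cast_le (α := ℝ)]
  push_cast [hcast]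
  set m := #(nonrepColorings G L (S.erase v))
  set c : ℝ := 25 / 16 * ((G.maxDegree : ℝ) ^ 2 / ((G.maxDegree : ℝ) - 1))
  calc 5 * ((G.maxDegree : ℝ) - 1) ^ 2 * m ≤ (m : ℝ) * k - m * c := by
        nlinarith [(m.cast_nonneg : (0 : ℝ) ≤ m)]
    _ ≤ #{f ∈ extensions G L S v | NonrepetitiveOn G S f} := by linarith
    _ ≤ #(nonrepColorings G L S) := by exact_mod_cast card_le_card hgood

theorem mul_card_nonrepColorings_erase_le (hΔ : 2 ≤ G.maxDegree)
    (hL : ∀ x, k ≤ #(L x)) (hk : 12.92 * ((G.maxDegree : ℝ) - 1) ^ 2 ≤ k) (S : Finset V) :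
    ∀ v ∈ S, 5 * (G.maxDegree - 1) ^ 2 * #(nonrepColorings G L (S.erase v)) ≤
      #(nonrepColorings G L S) := by
  induction S using Finset.strongInduction with
  | H S ih =>
    intro v hv
    refine mul_card_nonrepColorings_erase_le_of_forall_subset hΔ hL hk hv fun T hT => ?_
    exact pow_card_mul_le_of_forall_erase (c := fun R => #(nonrepColorings G L R))
      (fun R hR => ih R (lt_of_le_of_lt hR (erase_ssubset hv))) hT

theorem thueChoosable_of_le (hΔ : 2 ≤ G.maxDegree)
    (hk : 12.92 * ((G.maxDegree : ℝ) - 1) ^ 2 ≤ k) :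
    ThueChoosable G k := by
  intro L hL
  have h := pow_card_mul_le_of_forall_erase (c := fun R => #(nonrepColorings G L R))
    (fun R _ => mul_card_nonrepColorings_erase_le hΔ hL hk R) (subset_refl univ)
  rw [sdiff_self, bot_eq_empty, card_nonrepColorings_empty, mul_one] at h
  have hβ : 0 < 5 * (G.maxDegree - 1) ^ 2 := by
    have : 0 < G.maxDegree - 1 := by omega
    positivity
  obtain ⟨φ, hφ⟩ := card_pos.1 ((pow_pos hβ _).trans_le h)
  obtain ⟨hφL, hφ⟩ := mem_filter.1 hφ
  exact ⟨φ, fun x => (mem_listColorings.1 hφL).1 x (mem_univ x), hφ.nonrepetitive⟩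

end paths

theorem thue_le_thueChoice_le_harant_jendrol {V : Type} [Fintype V]
    (G : SimpleGraph V) [DecidableRel G.Adj] (hΔ : 2 ≤ G.maxDegree) :
    thueNumber G ≤ thueChoiceNumber G ∧
    (thueChoiceNumber G : ℤ) ≤ ⌈(12.92 : ℝ) * ((G.maxDegree : ℝ) - 1) ^ 2⌉ := by
  set x : ℝ := 12.92 * ((G.maxDegree : ℝ) - 1) ^ 2
  have hk : x ≤ (⌈x⌉.toNat : ℝ) := (Int.le_ceil x).trans (by exact_mod_cast Int.self_le_toNat _)
  have h := thueChoosable_of_le hΔ hk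
  refine ⟨thueNumber_le_thueChoiceNumber h, ?_⟩
  calc (thueChoiceNumber G : ℤ) ≤ ⌈x⌉.toNat := by exact_mod_cast thueChoiceNumber_le h
    _ = ⌈x⌉ := Int.toNat_of_nonneg (Int.ceil_nonneg (by positivity))
end

section
/- For the path graph P_n on n vertices: π(P_1) = 1, π(P_2) = π(P_3) = 2, and π(P_n) = 3 for every n > 3. -/
open SimpleGraph

/-!
Adjacent vertices need distinct colours, and with two colours a path on four vertices is
coloured `x y x y`; on at most three vertices the only squares are single edges, so two
alternating colours suffice. Every path in `P_n` runs through consecutive integers, so a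
colouring of `P_n` by a sequence `c` is nonrepetitive as soon as `c` has no square `w w` below
`n`. For `n > 3` take `c n = t (n + 1) - t n + 1` with `t` the Thue–Morse sequence: a square
`w w` in `c` with `|w| = k` at position `a` makes `t (a + j + k) - t (a + j)` constant for
`0 ≤ j ≤ k`, hence zero as `t` is `0/1`-valued, which gives an overlap in `t`. Thue–Morse is
overlap-free: an overlap of even period halves via `t (2x + r) = t x + r (mod 2)`, and one of odd
period is ruled out by `t (2x) ≠ t (2x + 1)`.
-/

variable {V β : Type*}

theorem thueNumber_eq {G : SimpleGraph V} {k : ℕ} (hk : ∃ φ : V → Fin k, Nonrepetitive G φ)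
    (hmin : ∀ j (φ : V → Fin j), Nonrepetitive G φ → k ≤ j) : thueNumber G = k :=
  IsLeast.csInf_eq ⟨hk, fun j ⟨φ, hφ⟩ => hmin j φ hφ⟩

namespace Nonrepetitive

variable {G : SimpleGraph V}

theorem ne_of_adj {φ : V → β} (hφ : Nonrepetitive G φ) {u v : V} (h : G.Adj u v) :
    φ u ≠ φ v := fun huv =>
  hφ (.cons h .nil) (by simp [h.ne]) [φ v] (List.cons_ne_nil _ _) (by simp [huv])

theorem two_le {k : ℕ} {φ : V → Fin k} (hφ : Nonrepetitive G φ) {u v : V} (h : G.Adj u v) :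
    2 ≤ k := by
  have := Fin.val_ne_of_ne (hφ.ne_of_adj h)
  omega

theorem three_le {k : ℕ} {φ : V → Fin k} (hφ : Nonrepetitive G φ) {a b c d : V}
    (hab : G.Adj a b) (hbc : G.Adj b c) (hcd : G.Adj c d) (hac : a ≠ c) (had : a ≠ d)
    (hbd : b ≠ d) : 3 ≤ k := by
  by_contra! hk
  have h₁ := Fin.val_ne_of_ne (hφ.ne_of_adj hab)
  have h₂ := Fin.val_ne_of_ne (hφ.ne_of_adj hbc)
  have h₃ := Fin.val_ne_of_ne (hφ.ne_of_adj hcd)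
  have hac' : φ a = φ c := Fin.ext (by omega)
  have hbd' : φ b = φ d := Fin.ext (by omega)
  refine hφ (.cons hab (.cons hbc (.cons hcd .nil))) ?_ [φ a, φ b] (by simp)
    (by simp [hac', hbd'])
  simp [hab.ne, hbc.ne, hcd.ne, hac, had, hbd]

end Nonrepetitive

theorem pathGraph_support_map_val_of_isPath {n : ℕ} {u v : Fin n} (p : (pathGraph n).Walk u v)
    (hp : p.IsPath) (huv : u ≤ v) : p.support.map Fin.val = List.range' u (v - u + 1) := by
  induction p with
  | nil => simp
  | @cons u w v h q ih =>
    rw [Walk.cons_isPath_iff] at hp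
    rcases pathGraph_adj.mp h with hw | hw
    · have hwv : w ≤ v := by
        by_contra! hvw
        have huv : u = v := Fin.ext (by omega)
        exact hp.2 (huv ▸ q.end_mem_support)
      rw [Walk.support_cons, List.map_cons, ih hp.1 hwv,
        show v.val - u + 1 = (v - w + 1) + 1 by omega, List.range'_succ (s := u.val), hw]
    · have hu : u.val ∈ q.support.map Fin.val := by
        rw [ih hp.1 (by omega), List.mem_range'_1]
        omega
      obtain ⟨x, hx, hxu⟩ := List.mem_map.mp hu
      exact absurd (Fin.ext hxu ▸ hx) hp.2

def IsSquareAt (c : ℕ → β) (a k : ℕ) : Prop :=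
  ∀ j < k, c (a + j) = c (a + j + k)

theorem isSquareAt_of_map_range'_eq_append_self {c : ℕ → β} {a m : ℕ} {l : List β}
    (h : (List.range' a m).map c = l ++ l) : m = 2 * l.length ∧ IsSquareAt c a l.length := by
  have hm : m = 2 * l.length := by simpa [two_mul] using congrArg List.length h
  refine ⟨hm, fun j hj => ?_⟩
  have h₁ := congrArg (·[j]?) h
  have h₂ := congrArg (·[j + l.length]?) h
  simp only [List.getElem?_map, List.getElem?_range' (show j < m by omega),
    List.getElem?_range' (show j + l.length < m by omega), List.getElem?_append_left hj,
    List.getElem?_append_right (Nat.le_add_left _ j), Nat.add_sub_cancel, Option.map_some,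
    one_mul] at h₁ h₂
  exact Option.some_injective _ (by rw [h₁, ← h₂, add_assoc])

theorem nonrepetitive_pathGraph_of_forall_not_isSquareAt {n : ℕ} {c : ℕ → β}
    (hc : ∀ a k, 0 < k → a + 2 * k ≤ n → ¬IsSquareAt c a k) :
    Nonrepetitive (pathGraph n) (c ∘ Fin.val) := by
  intro u v p hp l hl h
  wlog huv : u ≤ v generalizing u v l
  · refine this p.reverse hp.reverse l.reverse (by simpa using hl) ?_ (le_of_not_ge huv)
    rw [Walk.support_reverse, List.map_reverse, h, List.reverse_append]
  rw [← List.map_map, pathGraph_support_map_val_of_isPath p hp huv] at h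
  obtain ⟨hm, hsq⟩ := isSquareAt_of_map_range'_eq_append_self h
  exact hc u l.length (List.length_pos_iff.mpr hl) (by omega) hsq

def IsOverlapAt (c : ℕ → β) (a k : ℕ) : Prop :=
  ∀ j ≤ k, c (a + j) = c (a + j + k)

def thueMorse (n : ℕ) : ℕ := (Nat.digits 2 n).sum % 2

theorem thueMorse_lt_two (n : ℕ) : thueMorse n < 2 := Nat.mod_lt _ two_pos

theorem thueMorse_two_mul_add {r : ℕ} (hr : r < 2) (x : ℕ) :
    thueMorse (2 * x + r) = (thueMorse x + r) % 2 := by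
  by_cases h : r = 0 ∧ x = 0
  · obtain ⟨rfl, rfl⟩ := h
    rfl
  · rw [add_comm, thueMorse, Nat.digits_add 2 one_lt_two r x hr (by omega), List.sum_cons,
      thueMorse]
    omega

theorem thueMorse_two_mul_ne (x : ℕ) : thueMorse (2 * x) ≠ thueMorse (2 * x + 1) := by
  have h₀ := thueMorse_two_mul_add two_pos x
  have h₁ := thueMorse_two_mul_add one_lt_two x
  rw [add_zero] at h₀
  omega

theorem IsOverlapAt.thueMorse_half {i k : ℕ} (h : IsOverlapAt thueMorse i (2 * k)) :
    IsOverlapAt thueMorse (i / 2) k := by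
  intro j hj
  have hj' := h (2 * j) (by omega)
  rw [show i + 2 * j = 2 * (i / 2 + j) + i % 2 by omega,
    show 2 * (i / 2 + j) + i % 2 + 2 * k = 2 * (i / 2 + j + k) + i % 2 by omega,
    thueMorse_two_mul_add (Nat.mod_lt i two_pos), thueMorse_two_mul_add (Nat.mod_lt i two_pos)]
    at hj'
  have := thueMorse_lt_two (i / 2 + j)
  have := thueMorse_lt_two (i / 2 + j + k)
  omega

theorem not_isOverlapAt_thueMorse_of_odd {i k : ℕ} (hk : Odd k) :
    ¬IsOverlapAt thueMorse i k := by
  intro h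
  -- every window of length two contains a pair `2x, 2x + 1` in one of its two copies
  have hne : ∀ j < k, thueMorse (i + j) ≠ thueMorse (i + j + 1) := by
    intro j hj
    rcases Nat.even_or_odd (i + j) with ⟨x, hx⟩ | hij
    · rw [hx, ← two_mul]
      exact thueMorse_two_mul_ne x
    · obtain ⟨y, hy⟩ := hij.add_odd hk
      have hj₁ := h (j + 1) hj
      rw [show i + (j + 1) + k = i + j + k + 1 by omega, ← add_assoc] at hj₁
      rw [h j hj.le, hj₁, hy, ← two_mul]
      exact thueMorse_two_mul_ne y
  have halt : ∀ j ≤ k, thueMorse (i + j) = (thueMorse i + j) % 2 := by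
    intro j hj
    induction j with
    | zero => simp [Nat.mod_eq_of_lt (thueMorse_lt_two i)]
    | succ j ih =>
      have := hne j (by omega)
      have := thueMorse_lt_two (i + j + 1)
      rw [← add_assoc]
      omega
  have := h 0 k.zero_le
  rw [add_zero, halt k le_rfl] at this
  obtain ⟨m, rfl⟩ := hk
  omega

theorem not_isOverlapAt_thueMorse {k : ℕ} (hk : 0 < k) (i : ℕ) :
    ¬IsOverlapAt thueMorse i k := by
  induction k using Nat.strong_induction_on generalizing i with
  | _ k ih =>
    rcases Nat.even_or_odd' k with ⟨m, rfl | rfl⟩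
    · exact fun h => ih m (by omega) (by omega) (i / 2) h.thueMorse_half
    · exact not_isOverlapAt_thueMorse_of_odd (odd_two_mul_add_one m)

def ternaryThueMorse (n : ℕ) : Fin 3 :=
  ⟨thueMorse (n + 1) + 1 - thueMorse n, by have := thueMorse_lt_two (n + 1); omega⟩

theorem not_isSquareAt_ternaryThueMorse {k : ℕ} (hk : 0 < k) (a : ℕ) :
    ¬IsSquareAt ternaryThueMorse a k := by
  intro hsq
  have hdiff : ∀ j < k, thueMorse (a + j + 1) + thueMorse (a + j + k) =
      thueMorse (a + j + k + 1) + thueMorse (a + j) := by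
    intro j hj
    have := Fin.val_eq_of_eq (hsq j hj)
    simp only [ternaryThueMorse] at this
    have := thueMorse_lt_two (a + j)
    have := thueMorse_lt_two (a + j + k)
    omega
  -- so `thueMorse (a + j + k) - thueMorse (a + j)` does not depend on `j ≤ k`
  have hconst : ∀ j ≤ k,
      thueMorse (a + j + k) + thueMorse a = thueMorse (a + j) + thueMorse (a + k) := by
    intro j hj
    induction j with
    | zero => exact add_comm _ _
    | succ j ih =>
      have := hdiff j (by omega)
      have := ih (by omega)
      rw [← add_assoc, add_right_comm]
      omega
  -- and vanishes, as its values at `j = 0` and `j = k` add up to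
  -- `thueMorse (a + k + k) - thueMorse a ∈ {-1, 0, 1}`
  have h₀ : thueMorse a = thueMorse (a + k) := by
    have := hconst k le_rfl
    have := thueMorse_lt_two a
    have := thueMorse_lt_two (a + k)
    have := thueMorse_lt_two (a + k + k)
    omega
  refine not_isOverlapAt_thueMorse hk a fun j hj => ?_
  have := hconst j hj
  omega

theorem nonrepetitive_pathGraph_ternaryThueMorse (n : ℕ) :
    Nonrepetitive (pathGraph n) (ternaryThueMorse ∘ Fin.val) :=
  nonrepetitive_pathGraph_of_forall_not_isSquareAt fun a _ hk _ =>
    not_isSquareAt_ternaryThueMorse hk a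

theorem nonrepetitive_pathGraph_ofNat_fin_two {n : ℕ} (hn : n ≤ 3) :
    Nonrepetitive (pathGraph n) (Fin.ofNat 2 ∘ Fin.val) :=
  nonrepetitive_pathGraph_of_forall_not_isSquareAt fun a k hk hak hsq => by
    have := hsq 0 hk
    simp only [Fin.ext_iff, Fin.val_ofNat] at this
    omega

theorem two_le_of_nonrepetitive_pathGraph {n k : ℕ} (hn : 2 ≤ n) {φ : Fin n → Fin k}
    (hφ : Nonrepetitive (pathGraph n) φ) : 2 ≤ k :=
  hφ.two_le (u := ⟨0, by omega⟩) (v := ⟨1, hn⟩) (pathGraph_adj.mpr (.inl rfl))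

theorem three_le_of_nonrepetitive_pathGraph {n k : ℕ} (hn : 3 < n) {φ : Fin n → Fin k}
    (hφ : Nonrepetitive (pathGraph n) φ) : 3 ≤ k :=
  hφ.three_le (a := ⟨0, by omega⟩) (b := ⟨1, by omega⟩) (c := ⟨2, by omega⟩) (d := ⟨3, hn⟩)
    (pathGraph_adj.mpr (.inl rfl)) (pathGraph_adj.mpr (.inl rfl)) (pathGraph_adj.mpr (.inl rfl))
    (by simp) (by simp) (by simp)

theorem thue_pathGraph :
    thueNumber (pathGraph 1) = 1 ∧
    thueNumber (pathGraph 2) = 2 ∧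
    thueNumber (pathGraph 3) = 2 ∧
    ∀ n : ℕ, 3 < n → thueNumber (pathGraph n) = 3 := by
  refine ⟨?_, ?_, ?_, fun n hn => ?_⟩
  · exact thueNumber_eq ⟨_, nonrepetitive_pathGraph_of_forall_not_isSquareAt
      (c := fun _ => (0 : Fin 1)) fun _ _ _ _ => by omega⟩ fun _ φ _ => (φ 0).pos
  · exact thueNumber_eq ⟨_, nonrepetitive_pathGraph_ofNat_fin_two (by norm_num)⟩
      fun _ _ => two_le_of_nonrepetitive_pathGraph le_rfl
  · exact thueNumber_eq ⟨_, nonrepetitive_pathGraph_ofNat_fin_two le_rfl⟩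
      fun _ _ => two_le_of_nonrepetitive_pathGraph (by norm_num)
  · exact thueNumber_eq ⟨_, nonrepetitive_pathGraph_ternaryThueMorse n⟩
      fun _ _ => three_le_of_nonrepetitive_pathGraph hn
end

section
/- For every n ≥ 1, the path graph P_n on n vertices satisfies π_ℓ(P_n) ≤ 4; that is, for every assignment of a list L(v) of colours with |L(v)| ≥ 4 to each vertex v of P_n, there exists a nonrepetitive vertex colouring of P_n choosing each vertex's colour from its list. -/
/-!
A square-free word of length `k` whose `i`-th letter lies in `L i` yields a nonrepetitive colouring
of `P_k`, since the paths of `P_k` read infixes of the word or of its reverse. Such words exist when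
all lists have size at least four, by Rosenfeld's counting argument: let `C k` be the number of
square-free words of length `k`. Of their `≥ 4 C k` one-letter extensions, each one that is not
square-free ends in a square `l ++ l` and is determined by its square-free prefix of length
`k + 1 - |l|`, so `C (k + 1) ≥ 4 C k - ∑_{j ≤ k} C j`, and by induction `∑_{j ≤ k} C j ≤ 2 C k`.
-/

open SimpleGraph

namespace List

variable {α : Type*}

def SquareFree (w : List α) : Prop := ∀ l : List α, l ≠ [] → ¬ l ++ l <:+: w

theorem SquareFree.of_infix {v w : List α} (hw : w.SquareFree) (h : v <:+: w) : v.SquareFree :=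
  fun l hl hv => hw l hl (hv.trans h)

theorem SquareFree.exists_eq_append_append_of_not_squareFree_concat {w : List α} {a : α}
    (hw : w.SquareFree) (ha : ¬ (w ++ [a]).SquareFree) :
    ∃ u l : List α, l ≠ [] ∧ w ++ [a] = u ++ l ++ l := by
  simp only [SquareFree, not_forall, not_not] at ha
  obtain ⟨l, hl, hsq⟩ := ha
  rcases infix_concat_iff.mp hsq with ⟨u, hu⟩ | hinf
  · exact ⟨u, l, hl, by rw [← hu, append_assoc]⟩
  · exact absurd hinf (hw l hl)

theorem infix_map_iff_of_injective {β : Type*} {l₁ l₂ : List α} {f : α → β}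
    (hf : Function.Injective f) : l₁.map f <:+: l₂.map f ↔ l₁ <:+: l₂ := by
  refine ⟨fun ⟨s, t, h⟩ => ?_, fun h => h.map f⟩
  obtain ⟨l, t', rfl, hl, -⟩ := map_eq_append_iff.mp h.symm
  obtain ⟨s', m, rfl, -, hm⟩ := map_eq_append_iff.mp hl
  rw [map_injective_iff.mpr hf hm]
  exact infix_append s' l₁ t'

theorem eq_range'_of_isChain_succ {a : ℕ} {l : List ℕ}
    (h : (a :: l).IsChain fun x y => y = x + 1) : a :: l = range' a (l.length + 1) := by
  induction l generalizing a with
  | nil => rfl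
  | cons b l ih =>
    obtain ⟨rfl, h⟩ := isChain_cons_cons.mp h
    rw [length_cons, range'_succ, ← ih h]

theorem range'_infix_range {a m n : ℕ} (h : a + m ≤ n) : range' a m <:+: range n := by
  obtain ⟨r, rfl⟩ := Nat.exists_eq_add_of_le h
  refine ⟨range' 0 a, range' (a + m) r, ?_⟩
  rw [range_eq_range', ← range'_append_1 (s := 0) (m := a + m), ← range'_append_1 (s := 0) (m := a)]
  simp

theorem IsChain.infix_range {l : List ℕ} {n : ℕ} (h : l.IsChain fun x y => y = x + 1)
    (hn : ∀ x ∈ l, x < n) : l <:+: range n := by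
  rcases l with _ | ⟨a, l⟩
  · exact nil_infix
  rw [eq_range'_of_isChain_succ h] at hn ⊢
  exact range'_infix_range (hn (a + l.length) (mem_range'_1.mpr ⟨by omega, by omega⟩))

theorem Nodup.isChain_succ_or_isChain_pred {l : List ℕ}
    (h : l.IsChain fun x y => x + 1 = y ∨ y + 1 = x) (hl : l.Nodup) :
    (l.IsChain fun x y => y = x + 1) ∨ l.IsChain fun x y => x = y + 1 := by
  induction l with
  | nil => simp
  | cons a l ih =>
    rcases l with _ | ⟨b, l⟩
    · simp
    -- A turn `x, x ± 1, x` would repeat `x`.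
    obtain ⟨hab, h⟩ := isChain_cons_cons.mp h
    rcases ih h hl.of_cons with hup | hdown
    · rcases hab with rfl | rfl
      · exact .inl (hup.cons_cons rfl)
      · rcases l with _ | ⟨c, l⟩
        · exact .inr (by simp)
        · obtain rfl := (isChain_cons_cons.mp hup).1
          simp at hl
    · rcases hab with rfl | rfl
      · rcases l with _ | ⟨c, l⟩
        · exact .inl (by simp)
        · obtain rfl : c = a := by have := (isChain_cons_cons.mp hdown).1; omega
          simp at hl
      · exact .inr (hdown.cons_cons rfl)

end List

open List
open scoped Finset

section SquareFreeWords

variable {α : Type*}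

open Classical in
noncomputable def squareFreeWords (L : ℕ → Finset α) : ℕ → Finset (List α)
  | 0 => {[]}
  | k + 1 => ((squareFreeWords L k ×ˢ L k).image fun p => p.1 ++ [p.2]).filter SquareFree

theorem mem_squareFreeWords {L : ℕ → Finset α} {k : ℕ} {w : List α} :
    w ∈ squareFreeWords L k ↔
      w.length = k ∧ (∀ i (h : i < w.length), w[i] ∈ L i) ∧ w.SquareFree := by
  induction k generalizing w with
  | zero =>
    simp only [squareFreeWords, Finset.mem_singleton, length_eq_zero_iff]
    constructor
    · rintro rfl
      exact ⟨rfl, by simp, fun l hl h => hl (by simpa using eq_nil_of_infix_nil h)⟩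
    · exact fun h => h.1
  | succ k ih =>
    simp only [squareFreeWords, Finset.mem_filter, Finset.mem_image, Finset.mem_product, ih]
    constructor
    · rintro ⟨⟨⟨u, a⟩, ⟨⟨hu, huL, -⟩, ha⟩, rfl⟩, hsf⟩
      refine ⟨by simp [hu], fun i hi => ?_, hsf⟩
      rcases lt_or_eq_of_le (Nat.lt_succ_iff.mp (by simpa using hi)) with hi' | rfl
      · simpa [getElem_append_left hi'] using huL i hi'
      · simpa [hu] using ha
    · rintro ⟨hlen, hL, hsf⟩
      obtain ⟨u, a, rfl⟩ := (eq_nil_or_concat' w).resolve_left (by rintro rfl; simp at hlen)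
      have hu : u.length = k := by simpa using hlen
      have huL : ∀ i (h : i < u.length), u[i] ∈ L i := fun i hi => by
        have := hL i (by simp; omega)
        rwa [getElem_append_left hi] at this
      have ha : a ∈ L k := by simpa [hu] using hL u.length (by simp)
      exact ⟨⟨(u, a), ⟨⟨hu, huL, hsf.of_infix (prefix_append u [a]).isInfix⟩, ha⟩, rfl⟩, hsf⟩

theorem mem_squareFreeWords_length_of_prefix {L : ℕ → Finset α} {k : ℕ} {w p : List α}
    (hw : w ∈ squareFreeWords L k) (hp : p <+: w) : p ∈ squareFreeWords L p.length := by
  obtain ⟨-, hwL, hsf⟩ := mem_squareFreeWords.mp hw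
  refine mem_squareFreeWords.mpr ⟨rfl, fun i hi => ?_, hsf.of_infix hp.isInfix⟩
  rw [hp.getElem hi]
  exact hwL i _

theorem card_mul_card_le_card_squareFreeWords_succ_add_sum (L : ℕ → Finset α) (k : ℕ) :
    #(squareFreeWords L k) * #(L k) ≤
      #(squareFreeWords L (k + 1)) + ∑ j ∈ Finset.range (k + 1), #(squareFreeWords L j) := by
  classical
  set E := (squareFreeWords L k ×ˢ L k).image fun p => p.1 ++ [p.2]
  have hE : #E = #(squareFreeWords L k) * #(L k) := by
    rw [Finset.card_image_of_injective _ fun p q h => ?_, Finset.card_product]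
    obtain ⟨h₁, h₂⟩ := append_inj' h rfl
    exact Prod.ext h₁ (by simpa using h₂)
  -- A non-square-free extension `u ++ l ++ l` is recovered from its square-free prefix `u ++ l`.
  have hbad : {v ∈ E | ¬ v.SquareFree} ⊆ (Finset.range (k + 1)).biUnion fun j =>
      (squareFreeWords L j).image fun p => p ++ p.drop (2 * j - (k + 1)) := by
    intro v hv
    simp only [E, Finset.mem_filter, Finset.mem_image, Finset.mem_product, Prod.exists] at hv
    obtain ⟨⟨w, a, ⟨hw, -⟩, rfl⟩, hv⟩ := hv
    obtain ⟨hwk, -, hsf⟩ := mem_squareFreeWords.mp hw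
    obtain ⟨u, l, hl, hsq⟩ := hsf.exists_eq_append_append_of_not_squareFree_concat hv
    have hlen := congrArg length hsq
    have hl₀ := length_pos_iff.mpr hl
    simp only [length_append, length_singleton, hwk] at hlen
    have hp : u ++ l <+: w :=
      prefix_of_prefix_length_le ⟨l, hsq.symm⟩ (prefix_append w [a]) (by simp; omega)
    simp only [Finset.mem_biUnion, Finset.mem_range, Finset.mem_image]
    refine ⟨(u ++ l).length, by simp; omega, u ++ l, mem_squareFreeWords_length_of_prefix hw hp, ?_⟩
    rw [show 2 * (u ++ l).length - (k + 1) = u.length by simp; omega, drop_left, hsq]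
  calc #(squareFreeWords L k) * #(L k)
      = #{v ∈ E | v.SquareFree} + #{v ∈ E | ¬ v.SquareFree} :=
        (hE ▸ Finset.card_filter_add_card_filter_not _).symm
    _ ≤ #(squareFreeWords L (k + 1)) + ∑ j ∈ Finset.range (k + 1), #(squareFreeWords L j) := by
      refine add_le_add le_rfl ((Finset.card_le_card hbad).trans ?_)
      exact Finset.card_biUnion_le.trans (Finset.sum_le_sum fun j _ => Finset.card_image_le)

theorem sum_card_squareFreeWords_le {L : ℕ → Finset α} {k : ℕ} (hL : ∀ i < k, 4 ≤ #(L i)) :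
    ∑ j ∈ Finset.range (k + 1), #(squareFreeWords L j) ≤ 2 * #(squareFreeWords L k) := by
  induction k with
  | zero => simp [squareFreeWords]
  | succ k ih =>
    have hsum := ih fun i hi => hL i (by omega)
    have hstep := card_mul_card_le_card_squareFreeWords_succ_add_sum L k
    have h4 := Nat.mul_le_mul_left #(squareFreeWords L k) (hL k k.lt_succ_self)
    rw [Finset.sum_range_succ]
    omega

theorem squareFreeWords_nonempty {L : ℕ → Finset α} {k : ℕ} (hL : ∀ i < k, 4 ≤ #(L i)) :
    (squareFreeWords L k).Nonempty := by
  have h := sum_card_squareFreeWords_le hL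
  rw [Finset.sum_range_succ'] at h
  simp only [squareFreeWords, Finset.card_singleton] at h
  exact Finset.card_pos.mp (by omega)

theorem exists_squareFree_ofFn {n : ℕ} (L : Fin n → Finset α) (hL : ∀ i, 4 ≤ #(L i)) :
    ∃ φ : Fin n → α, (∀ i, φ i ∈ L i) ∧ (ofFn φ).SquareFree := by
  let L' : ℕ → Finset α := fun i => if h : i < n then L ⟨i, h⟩ else ∅
  have hL' : ∀ i < n, 4 ≤ #(L' i) := fun i hi => by simpa [L', hi] using hL ⟨i, hi⟩
  obtain ⟨w, hw⟩ := squareFreeWords_nonempty hL'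
  obtain ⟨rfl, hwL, hsf⟩ := mem_squareFreeWords.mp hw
  refine ⟨fun i => w[(i : ℕ)], fun i => ?_, by rwa [ofFn_getElem]⟩
  simpa [L'] using hwL i i.isLt

end SquareFreeWords

namespace SimpleGraph

theorem Walk.IsPath.support_infix_finRange_pathGraph {n : ℕ} {u v : Fin n}
    {p : (pathGraph n).Walk u v} (hp : p.IsPath) :
    p.support <:+: List.finRange n ∨ p.support.reverse <:+: List.finRange n := by
  have hchain : (p.support.map Fin.val).IsChain fun x y => x + 1 = y ∨ y + 1 = x :=
    List.isChain_map _ |>.mpr <| p.isChain_adj_support.imp fun _ _ => pathGraph_adj.mp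
  simp only [← List.infix_map_iff_of_injective Fin.val_injective, List.map_coe_finRange_eq_range,
    List.map_reverse]
  refine (hp.support_nodup.map Fin.val_injective).isChain_succ_or_isChain_pred hchain |>.imp
    (·.infix_range (by simp)) fun hdown => ?_
  exact (List.isChain_reverse.mpr hdown).infix_range (by simp)

end SimpleGraph

theorem nonrepetitive_pathGraph_of_squareFree {α : Type*} {n : ℕ} {φ : Fin n → α}
    (hφ : (List.ofFn φ).SquareFree) : Nonrepetitive (pathGraph n) φ := by
  intro u v p hp l hl hrep
  rw [List.ofFn_eq_map] at hφ
  rcases hp.support_infix_finRange_pathGraph with h | h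
  · exact hφ l hl (hrep ▸ h.map φ)
  · refine hφ l.reverse (by simpa using hl) ?_
    have := h.map φ
    rwa [List.map_reverse, hrep, List.reverse_append] at this

theorem thueChoice_pathGraph_general (n : ℕ) :
    thueChoiceNumber (pathGraph n) ≤ 4 := by
  refine Nat.sInf_le fun L hL => ?_
  obtain ⟨φ, hφL, hφ⟩ := exists_squareFree_ofFn L hL
  exact ⟨φ, hφL, nonrepetitive_pathGraph_of_squareFree hφ⟩

theorem thueChoice_pathGraph (n : ℕ) (hn : 1 ≤ n) :
    thueChoiceNumber (pathGraph n) ≤ 4 :=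
  thueChoice_pathGraph_general n
end

section
/- Every finite tree T with radius rad(T) ≤ 4 satisfies π(T) ≤ 3. -/
open SimpleGraph

/-!
Colour every vertex by its distance from a centre `u`, the levels `0, 1, 2, 3, 4` receiving the
colours `0, 1, 2, 0, 1`. In a tree a vertex has at most one neighbour closer to `u`, so along
any path the levels first descend and then ascend in steps of one. When all levels are at most
`4` there are only finitely many such level sequences, and a direct check shows that none of
their colour sequences is a square.
-/

theorem List.take_eq_drop_of_eq_append_self {α : Type*} {w l : List α} (h : w = l ++ l) :
    w.take (w.length / 2) = w.drop (w.length / 2) := by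
  have hhalf : w.length / 2 = l.length := by
    rw [h, List.length_append]; omega
  rw [hhalf, h, List.take_left, List.drop_left]

/-- `valley t k m = [t + k, …, t + 1, t, t + 1, …, t + m]`. -/
def valley (t : ℕ) : ℕ → ℕ → List ℕ
  | 0, m => List.range' t (m + 1)
  | k + 1, m => (t + k + 1) :: valley t k m

theorem valley_eq_cons (t k m : ℕ) : ∃ r, valley t k m = (t + k) :: r := by
  cases k <;> exact ⟨_, rfl⟩

theorem add_right_mem_valley (t k m : ℕ) : t + m ∈ valley t k m := by
  induction k with
  | zero => simp [valley]
  | succ k ih => exact List.mem_cons_of_mem _ ih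

def levelColour (n : ℕ) : Fin 3 := [0, 1, 2, 0, 1].getD n 0

theorem valley_map_levelColour_ne_append_self {t k m : ℕ} (h : ∀ x ∈ valley t k m, x ≤ 4)
    (l : List (Fin 3)) : (valley t k m).map levelColour ≠ l ++ l := by
  have hk : t + k ≤ 4 := h _ <| by obtain ⟨r, hr⟩ := valley_eq_cons t k m; simp [hr]
  have hm : t + m ≤ 4 := h _ (add_right_mem_valley t k m)
  have hcheck : ∀ t ≤ 4, ∀ k ≤ 4 - t, ∀ m ≤ 4 - t,
      let w := (valley t k m).map levelColour
      w.take (w.length / 2) ≠ w.drop (w.length / 2) := by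
    decide
  exact fun hw => hcheck t (by omega) k (by omega) m (by omega)
    (List.take_eq_drop_of_eq_append_self hw)

theorem SimpleGraph.Walk.dist_le_of_mem_support {V : Type*} {G : SimpleGraph V} {u v x : V}
    (p : G.Walk u v) (hx : x ∈ p.support) : G.dist u x ≤ p.length := by
  classical
  exact (dist_le (p.takeUntil x hx)).trans (p.length_takeUntil_le_length hx)

namespace SimpleGraph.IsTree

variable {V : Type*} {T : SimpleGraph V}

theorem eq_of_adj_of_dist_lt (hT : T.IsTree) (u : V) {x w₁ w₂ : V}
    (h₁ : T.Adj x w₁) (h₂ : T.Adj x w₂)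
    (hd₁ : T.dist u w₁ < T.dist u x) (hd₂ : T.dist u w₂ < T.dist u x) : w₁ = w₂ := by
  obtain ⟨p, hp, -⟩ := hT.connected.exists_path_of_dist u x
  have eq_penultimate (w : V) (hadj : T.Adj x w) (hd : T.dist u w < T.dist u x) :
      w = p.penultimate := by
    obtain ⟨q, hq, hql⟩ := hT.connected.exists_path_of_dist u w
    have hx : x ∉ q.support := fun hx => by
      have := q.dist_le_of_mem_support hx
      omega
    exact hT.isAcyclic.eq_penultimate_of_adj_end hp hadj
      (hT.isAcyclic.mem_support_of_ne_mem_support_of_adj_of_isPath hp hq hadj hx)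
  rw [eq_penultimate w₁ h₁ hd₁, eq_penultimate w₂ h₂ hd₂]

theorem map_dist_support_eq_valley (hT : T.IsTree) (u : V) {v w : V} {p : T.Walk v w}
    (hp : p.IsPath) : ∃ t k m, p.support.map (T.dist u) = valley t k m := by
  induction p with
  | nil => exact ⟨_, 0, 0, rfl⟩
  | @cons v x w hvx q ih =>
    rw [Walk.cons_isPath_iff] at hp
    obtain ⟨t, k, m, hq⟩ := ih hp.1
    have hx : T.dist u x = t + k := by
      obtain ⟨r, hr⟩ := valley_eq_cons t k m
      rw [← q.cons_tail_support, hr, List.map_cons, List.cons.injEq] at hq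
      exact hq.1
    rw [Walk.support_cons, List.map_cons, hq]
    rcases hT.dist_eq_dist_add_one_of_adj u hvx with hv | hv
    · exact ⟨t, k + 1, m, by rw [hv, hx]; rfl⟩
    · cases k with
      | zero =>
        obtain ⟨s, rfl⟩ : ∃ s, t = s + 1 := ⟨T.dist u v, by omega⟩
        exact ⟨s, 0, m + 1, by rw [show T.dist u v = s by omega]; rfl⟩
      | succ k =>
        -- otherwise `v` and `y` are two lower neighbours of `x`, so `v = y` lies on `q`
        obtain ⟨r, hr⟩ := valley_eq_cons t k m
        cases q with
        | nil => simp [valley, hr] at hq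
        | @cons _ y _ hxy q =>
          rw [Walk.support_cons, ← q.cons_tail_support, valley, hr] at hq
          simp only [List.map_cons, List.cons.injEq] at hq
          have hvy : v = y := hT.eq_of_adj_of_dist_lt u hvx.symm hxy (by omega) (by omega)
          subst hvy
          exact (hp.2 (List.mem_cons_of_mem _ q.start_mem_support)).elim

end SimpleGraph.IsTree

theorem thue_tree_small_radius_general {V : Type} (T : SimpleGraph V)
    (hT : T.IsTree) (hrad : ∃ u : V, ∀ v : V, T.dist u v ≤ 4) :
    thueNumber T ≤ 3 := by
  obtain ⟨u, hu⟩ := hrad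
  refine Nat.sInf_le ⟨levelColour ∘ T.dist u, fun a b p hp l _ hl => ?_⟩
  obtain ⟨t, k, m, hlevels⟩ := hT.map_dist_support_eq_valley u hp
  have hbound : ∀ x ∈ valley t k m, x ≤ 4 := by
    simpa [← hlevels] using fun v _ => hu v
  apply valley_map_levelColour_ne_append_self hbound l
  rwa [← List.map_map, hlevels] at hl

theorem thue_tree_small_radius {V : Type} [Fintype V] (T : SimpleGraph V)
    (hT : T.IsTree) (hrad : ∃ u : V, ∀ v : V, T.dist u v ≤ 4) :
    thueNumber T ≤ 3 :=
  thue_tree_small_radius_general T hT hrad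
end

section
/- Every cubic graph G (a finite simple graph in which every vertex has degree exactly 3) satisfies π(G) ≤ 108. -/
open SimpleGraph

/-!
Rosenfeld's counting argument. For `S ⊆ V` let `C(S)` be the number of `108`-colourings of `S`
that are nonrepetitive on the paths inside `S`; we show `C(S) ≥ 81 · C(S - v)` for `v ∈ S`, by
induction on `S`. Extend each colouring of `S - v` by any colour at `v`: this gives `108 · C(S - v)`
colourings of `S`. A bad one has a path on `2t` vertices through `v`, coloured `l ++ l`, with `v` in
its second half after reversing the path if necessary. That half copies the colours of the first, so the
colouring is determined by the path and by its restriction to `S` minus the second half, which is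
one of at most `C(S - v) / 81^(t-1)` colourings by induction. A cubic graph has at most
`2t · 3^(2t-1)` such paths, and `∑ₜ 2t · 3^(2t-1) / 81^(t-1) = 54 ∑ₜ t / 9^t < 27`, so at least
`81 · C(S - v)` extensions are good. Hence `C(V) ≥ 81^|V| > 0`.
-/

open Finset

theorem sum_le_of_pow_mul_le (y : ℕ → ℕ) (a n : ℕ) (hy : ∀ t, 9 ^ t * y t ≤ 54 * t * a) :
    ∑ t ∈ range n, y t ≤ 27 * a := by
  have hgeom : ∑ t ∈ range n, (t * (1 / 9) ^ t : ℝ) ≤ 9 / 64 := by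
    have := sum_le_hasSum (range n) (fun t _ => by positivity)
      (hasSum_coe_mul_geometric_of_norm_lt_one (𝕜 := ℝ) (r := 1 / 9) (by norm_num))
    norm_num at this ⊢
    exact this
  have hterm : ∀ t, (y t : ℝ) ≤ 54 * a * (t * (1 / 9) ^ t) := by
    intro t
    have h : ((9 ^ t * y t : ℕ) : ℝ) ≤ (54 * t * a : ℕ) := Nat.cast_le.mpr (hy t)
    rw [one_div, inv_pow, ← div_eq_mul_inv, mul_div_assoc', le_div_iff₀ (by positivity)]
    push_cast at h
    linarith
  have : ∑ t ∈ range n, (y t : ℝ) ≤ 27 * a :=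
    calc ∑ t ∈ range n, (y t : ℝ) ≤ ∑ t ∈ range n, (54 * a * (t * (1 / 9) ^ t) : ℝ) :=
          sum_le_sum fun t _ => hterm t
      _ = 54 * a * ∑ t ∈ range n, (t * (1 / 9) ^ t : ℝ) := (mul_sum ..).symm
      _ ≤ 54 * a * (9 / 64) := by gcongr
      _ ≤ 27 * a := by nlinarith [(Nat.cast_nonneg a : (0 : ℝ) ≤ a)]
  exact_mod_cast this

theorem pow_mul_sum_le_of_card_le {ι : Type*} (s : Finset ι) (x : ι → ℕ) (a t : ℕ)
    (hs : #s ≤ 2 * t * 3 ^ (2 * t - 1)) (hx : ∀ i ∈ s, 81 ^ (t - 1) * x i ≤ a) :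
    9 ^ t * ∑ i ∈ s, x i ≤ 54 * t * a := by
  rcases t with _ | m
  · simp_all
  have hsum : 9 ^ m * (9 ^ m * ∑ i ∈ s, x i) ≤ 9 ^ m * (6 * (m + 1) * a) :=
    calc 9 ^ m * (9 ^ m * ∑ i ∈ s, x i) = ∑ i ∈ s, 81 ^ m * x i := by
          rw [← mul_assoc, ← mul_pow, mul_sum]
          norm_num
      _ ≤ #s * a := by simpa using sum_le_sum hx
      _ ≤ 2 * (m + 1) * 3 ^ (2 * m + 1) * a := by
          gcongr
          rwa [show 2 * (m + 1) - 1 = 2 * m + 1 by omega] at hs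
      _ = 9 ^ m * (6 * (m + 1) * a) := by rw [pow_succ, pow_mul]; ring
  have := Nat.le_of_mul_le_mul_left hsum (by positivity)
  rw [pow_succ]
  linarith

namespace SimpleGraph

section AdjChains

variable {V : Type*} [DecidableEq V] (G : SimpleGraph V) [G.LocallyFinite]

def adjChains : V → ℕ → Finset (List V)
  | _, 0 => {[]}
  | u, m + 1 => (G.neighborFinset u).biUnion fun w => (adjChains w m).image (w :: ·)

def adjChainsThrough (v : V) (n : ℕ) : Finset (List V) :=
  (range n).biUnion fun i =>
    (G.adjChains v i ×ˢ G.adjChains v (n - 1 - i)).image fun pq => pq.1.reverse ++ v :: pq.2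

variable {G}

theorem mem_adjChains {u : V} {m : ℕ} {L : List V} :
    L ∈ G.adjChains u m ↔ L.length = m ∧ (u :: L).IsChain G.Adj := by
  induction m generalizing u L with
  | zero => cases L <;> simp [adjChains]
  | succ m ih =>
    cases L with
    | nil => simp [adjChains]
    | cons w L => simp [adjChains, ih, and_left_comm]

theorem card_adjChains_le {d : ℕ} (hd : ∀ v, G.degree v ≤ d) (u : V) (m : ℕ) :
    #(G.adjChains u m) ≤ d ^ m := by
  induction m generalizing u with
  | zero => simp [adjChains]
  | succ m ih =>
    calc #(G.adjChains u (m + 1))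
        ≤ ∑ w ∈ G.neighborFinset u, #((G.adjChains w m).image (w :: ·)) := card_biUnion_le
      _ ≤ ∑ _w ∈ G.neighborFinset u, d ^ m := sum_le_sum fun w _ => card_image_le.trans (ih w)
      _ ≤ d ^ (m + 1) := by
        rw [sum_const, card_neighborFinset_eq_degree, smul_eq_mul, pow_succ']
        exact Nat.mul_le_mul_right _ (hd u)

theorem mem_adjChainsThrough {v : V} {L : List V} (hL : L.IsChain G.Adj) (hv : v ∈ L) :
    L ∈ G.adjChainsThrough v L.length := by
  set i := L.idxOf v
  have hi : i < L.length := List.idxOf_lt_length_iff.mpr hv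
  have hLi : L[i] = v := List.getElem_idxOf hi
  have hsplit : L = (L.take i).reverse.reverse ++ v :: L.drop (i + 1) := by
    rw [List.reverse_reverse, ← hLi, ← List.drop_eq_getElem_cons hi, List.take_append_drop]
  refine mem_biUnion.mpr ⟨i, mem_range.mpr hi, mem_image.mpr
    ⟨((L.take i).reverse, L.drop (i + 1)), mem_product.mpr ⟨?_, ?_⟩, hsplit.symm⟩⟩
  · refine mem_adjChains.mpr ⟨by simp [hi.le], ?_⟩
    have hrev : v :: (L.take i).reverse = (L.take (i + 1)).reverse := by
      rw [List.take_add_one, List.getElem?_eq_getElem hi, hLi]; simp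
    rw [hrev, List.isChain_reverse]
    exact (hL.take _).imp fun _ _ h => h.symm
  · refine mem_adjChains.mpr ⟨by simp; omega, ?_⟩
    rw [← hLi, ← List.drop_eq_getElem_cons hi]
    exact hL.drop _

theorem length_eq_of_mem_adjChainsThrough {v : V} {n : ℕ} {L : List V}
    (hL : L ∈ G.adjChainsThrough v n) : L.length = n := by
  obtain ⟨i, hi, hL⟩ := mem_biUnion.mp hL
  obtain ⟨⟨p, q⟩, hpq, rfl⟩ := mem_image.mp hL
  obtain ⟨hp, hq⟩ := mem_product.mp hpq
  simp only [List.length_append, List.length_reverse, List.length_cons,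
    (mem_adjChains.mp hp).1, (mem_adjChains.mp hq).1]
  have := mem_range.mp hi
  omega

theorem card_adjChainsThrough_le {d : ℕ} (hd : ∀ v, G.degree v ≤ d) (v : V) (n : ℕ) :
    #(G.adjChainsThrough v n) ≤ n * d ^ (n - 1) := by
  calc #(G.adjChainsThrough v n)
      ≤ ∑ i ∈ range n, #(G.adjChains v i ×ˢ G.adjChains v (n - 1 - i)) :=
        card_biUnion_le.trans (sum_le_sum fun _ _ => card_image_le)
    _ ≤ ∑ i ∈ range n, d ^ (n - 1) := sum_le_sum fun i hi => by
        have := Nat.mul_le_mul (card_adjChains_le hd v i) (card_adjChains_le hd v (n - 1 - i))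
        rw [card_product]
        rwa [← pow_add, Nat.add_sub_of_le (Nat.le_sub_one_of_lt (mem_range.mp hi))] at this
    _ = n * d ^ (n - 1) := by simp

end AdjChains

section NonrepetitiveOn

variable {V β : Type*} (G : SimpleGraph V)

def NonrepetitiveOn (S : Finset V) (f : V → β) : Prop :=
  ∀ ⦃u w : V⦄ (p : G.Walk u w), p.IsPath → (∀ x ∈ p.support, x ∈ S) →
    ∀ l : List β, l ≠ [] → p.support.map f ≠ l ++ l

variable {G}

theorem NonrepetitiveOn.mono {S T : Finset V} {f : V → β} (h : G.NonrepetitiveOn S f)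
    (hTS : T ⊆ S) : G.NonrepetitiveOn T f :=
  fun _ _ p hp hT => h p hp fun x hx => hTS (hT x hx)

theorem NonrepetitiveOn.congr {S : Finset V} {f g : V → β} (h : G.NonrepetitiveOn S f)
    (hfg : ∀ x ∈ S, f x = g x) : G.NonrepetitiveOn S g := by
  intro u w p hp hS l hl hmap
  refine h p hp hS l hl ?_
  rw [← hmap, List.map_congr_left fun x hx => hfg x (hS x hx)]

theorem nonrepetitiveOn_empty (f : V → β) : G.NonrepetitiveOn ∅ f :=
  fun _ _ p _ hS => absurd (hS _ p.start_mem_support) (notMem_empty _)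

theorem NonrepetitiveOn.nonrepetitive [Fintype V] {f : V → β} (h : G.NonrepetitiveOn univ f) :
    Nonrepetitive G f :=
  fun _ _ p hp => h p hp fun x _ => mem_univ x

theorem exists_repetition_mem_drop [DecidableEq V] {S : Finset V} {v : V} {f : V → β}
    (hS' : G.NonrepetitiveOn (S.erase v) f) (hS : ¬ G.NonrepetitiveOn S f) :
    ∃ (L : List V) (l : List β), L.IsChain G.Adj ∧ L.Nodup ∧ (∀ x ∈ L, x ∈ S) ∧ l ≠ [] ∧
      L.map f = l ++ l ∧ v ∈ L.drop l.length := by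
  simp only [NonrepetitiveOn, not_forall, not_not] at hS
  obtain ⟨u, w, p, hp, hpS, l, hl, hmap⟩ := hS
  have hv : v ∈ p.support := by
    by_contra hv
    exact hS' p hp (fun x hx => mem_erase.mpr ⟨fun h => hv (h ▸ hx), hpS x hx⟩) l hl hmap
  have hlen : p.support.length = l.length + l.length := by
    simpa using congrArg List.length hmap
  by_cases hdrop : v ∈ p.support.drop l.length
  · exact ⟨_, l, p.isChain_adj_support, hp.support_nodup, hpS, hl, hmap, hdrop⟩
  -- otherwise `v` is in the first half, which becomes the second half of the reversed path
  refine ⟨p.support.reverse, l.reverse, by simpa using p.reverse.isChain_adj_support,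
    List.nodup_reverse.mpr hp.support_nodup, fun x hx => hpS x (List.mem_reverse.mp hx),
    by simpa using hl, by simp [List.map_reverse, hmap], ?_⟩
  rw [List.length_reverse, List.drop_reverse, List.mem_reverse, hlen, Nat.add_sub_cancel]
  rw [← List.take_append_drop l.length p.support, List.mem_append] at hv
  exact hv.resolve_right hdrop

end NonrepetitiveOn

section Colourings

variable {V : Type*} [Fintype V] [DecidableEq V] (G : SimpleGraph V) (k : ℕ) [NeZero k]

-- Colourings of `S` are represented by colourings of `V` that vanish off `S`.
open Classical in
noncomputable def nonrepColouringsOn (S : Finset V) : Finset (V → Fin k) :=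
  {f | (∀ x ∉ S, f x = 0) ∧ G.NonrepetitiveOn S f}

noncomputable def extensions (S : Finset V) (v : V) : Finset (V → Fin k) :=
  (G.nonrepColouringsOn k (S.erase v) ×ˢ univ).image fun gc => Function.update gc.1 v gc.2

variable {G k}

theorem mem_nonrepColouringsOn {S : Finset V} {f : V → Fin k} :
    f ∈ G.nonrepColouringsOn k S ↔ (∀ x ∉ S, f x = 0) ∧ G.NonrepetitiveOn S f := by
  simp [nonrepColouringsOn]

theorem zero_mem_nonrepColouringsOn_empty : 0 ∈ G.nonrepColouringsOn k ∅ :=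
  mem_nonrepColouringsOn.mpr ⟨fun _ _ => rfl, nonrepetitiveOn_empty 0⟩

theorem card_extensions (S : Finset V) (v : V) :
    #(G.extensions k S v) = #(G.nonrepColouringsOn k (S.erase v)) * k := by
  rw [extensions, card_image_of_injOn, card_product, card_univ, Fintype.card_fin]
  rintro ⟨g, c⟩ hg ⟨g', c'⟩ hg' heq
  have hv : ∀ h ∈ G.nonrepColouringsOn k (S.erase v), h v = 0 :=
    fun h hh => (mem_nonrepColouringsOn.mp hh).1 v (notMem_erase v S)
  simp only at heq
  have hc : c = c' := by simpa using congrFun heq v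
  have hg : g = g' :=
    calc g = Function.update (Function.update g v c) v 0 := by
          simp [hv g (mem_product.mp hg).1]
      _ = g' := by rw [heq]; simp [hv g' (mem_product.mp hg').1]
  rw [hc, hg]

theorem mem_extensions {S : Finset V} {v : V} (hv : v ∈ S) {f : V → Fin k}
    (hf : f ∈ G.extensions k S v) :
    (∀ x ∉ S, f x = 0) ∧ G.NonrepetitiveOn (S.erase v) f := by
  obtain ⟨⟨g, c⟩, hgc, rfl⟩ := mem_image.mp hf
  obtain ⟨hg0, hg⟩ := mem_nonrepColouringsOn.mp (mem_product.mp hgc).1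
  refine ⟨fun x hx => ?_, hg.congr fun x hx => ?_⟩
  · rw [Function.update_of_ne (ne_of_mem_of_not_mem hv hx).symm]
    exact hg0 x fun h => hx (mem_of_mem_erase h)
  · exact (Function.update_of_ne (ne_of_mem_erase hx) _ _).symm

theorem piecewise_zero_mem_nonrepColouringsOn {S H : Finset V} {v : V} (hvH : v ∈ H)
    {f : V → Fin k} (hf0 : ∀ x ∉ S, f x = 0) (hf : G.NonrepetitiveOn (S.erase v) f) :
    H.piecewise (0 : V → Fin k) f ∈ G.nonrepColouringsOn k (S \ H) := by
  refine mem_nonrepColouringsOn.mpr ⟨fun x hx => ?_, ?_⟩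
  · by_cases hxH : x ∈ H
    · simp [hxH]
    · simp [hxH, hf0 x fun hxS => hx (mem_sdiff.mpr ⟨hxS, hxH⟩)]
  · refine (hf.mono fun x hx => ?_).congr fun x hx => ?_
    · obtain ⟨hxS, hxH⟩ := mem_sdiff.mp hx
      exact mem_erase.mpr ⟨ne_of_mem_of_not_mem hvH hxH |>.symm, hxS⟩
    · simp [(mem_sdiff.mp hx).2]

end Colourings

section Repetitions

variable {V β : Type*} [DecidableEq V]

/-- On `L = a₀ ⋯ a_{2t-1}`, sends `a_{t+j}` to `a_j` and fixes every vertex outside the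
second half. -/
def halfShift (t : ℕ) (L : List V) (x : V) : V :=
  if x ∈ L.drop t then L.getD ((L.drop t).idxOf x) x else x

theorem piecewise_comp_halfShift {L : List V} {l : List β} {f : V → β} (hnd : L.Nodup)
    (hrep : L.map f = l ++ l) (g : V → β) :
    (L.drop l.length).toFinset.piecewise g f ∘ halfShift l.length L = f := by
  set t := l.length
  have hlen : L.length = t + t := by simpa using congrArg List.length hrep
  funext x
  by_cases hx : x ∈ L.drop t
  · rw [Function.comp_apply, halfShift, if_pos hx]
    set j := (L.drop t).idxOf x
    have hjd : j < (L.drop t).length := List.idxOf_lt_length_iff.mpr hx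
    have hjt : j < t := by simp only [List.length_drop] at hjd; omega
    have hx' : L[t + j] = x := List.getElem_drop.symm.trans (List.getElem_idxOf hjd)
    have hfirst : L[j] ∈ L.take t := by
      have hj' : j < (L.take t).length := by simp; omega
      simpa only [List.getElem_take] using List.getElem_mem hj'
    rw [List.getD_eq_getElem _ _ (by omega), piecewise_eq_of_notMem _ _ _ (by
      simpa using List.disjoint_take_drop hnd le_rfl hfirst)]
    refine Eq.trans ?_ (congrArg f hx')
    have h1 := List.getElem_of_eq hrep (i := j) (by simp; omega)
    have h2 := List.getElem_of_eq hrep (i := t + j) (by simp; omega)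
    simp only [List.getElem_map, List.getElem_append_left hjt] at h1
    simp only [List.getElem_map, List.getElem_append_right (Nat.le_add_right t j)] at h2
    simp [h1, h2, t]
  · rw [Function.comp_apply, halfShift, if_neg hx]
    exact piecewise_eq_of_notMem _ _ _ (by simpa using hx)

variable (G : SimpleGraph V) [G.LocallyFinite]

def repetitionCandidates (S : Finset V) (v : V) (t : ℕ) : Finset (List V) :=
  {L ∈ G.adjChainsThrough v (2 * t) | L.Nodup ∧ (∀ x ∈ L, x ∈ S) ∧ v ∈ L.drop t}

variable {G}

theorem mem_repetitionCandidates {S : Finset V} {v : V} {t : ℕ} {L : List V} :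
    L ∈ G.repetitionCandidates S v t ↔
      L ∈ G.adjChainsThrough v (2 * t) ∧ L.Nodup ∧ (∀ x ∈ L, x ∈ S) ∧ v ∈ L.drop t :=
  mem_filter

theorem card_repetitionCandidates_le {d : ℕ} (hd : ∀ v, G.degree v ≤ d) (S : Finset V) (v : V)
    (t : ℕ) : #(G.repetitionCandidates S v t) ≤ 2 * t * d ^ (2 * t - 1) :=
  (card_filter_le _ _).trans (card_adjChainsThrough_le hd v _)

theorem sdiff_subset_erase_of_mem_repetitionCandidates {S : Finset V} {v : V} {t : ℕ}
    {L : List V} (hL : L ∈ G.repetitionCandidates S v t) :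
    S \ (L.drop t).toFinset ⊆ S.erase v ∧
      #(S.erase v) - #(S \ (L.drop t).toFinset) = t - 1 := by
  obtain ⟨hL, hnd, hLS, hv⟩ := mem_repetitionCandidates.mp hL
  have hlen := length_eq_of_mem_adjChainsThrough hL
  have hHS : (L.drop t).toFinset ⊆ S := fun x hx =>
    hLS x (List.mem_of_mem_drop (List.mem_toFinset.mp hx))
  have hH : #(L.drop t).toFinset = t := by
    rw [List.toFinset_card_of_nodup ((List.drop_sublist t L).nodup hnd), List.length_drop]
    omega
  have hvS : v ∈ S := hHS (List.mem_toFinset.mpr hv)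
  have ht : t ≤ #S := hH ▸ card_le_card hHS
  have ht1 : 1 ≤ t := hH ▸ card_pos.mpr ⟨v, List.mem_toFinset.mpr hv⟩
  refine ⟨fun x hx => mem_erase.mpr ⟨?_, (mem_sdiff.mp hx).1⟩, ?_⟩
  · rintro rfl
    exact (mem_sdiff.mp hx).2 (List.mem_toFinset.mpr hv)
  · rw [card_erase_of_mem hvS, card_sdiff_of_subset hHS, hH]
    omega

end Repetitions

section Extensions

variable {V : Type*} [Fintype V] [DecidableEq V] {G : SimpleGraph V} [G.LocallyFinite]
  {k : ℕ} [NeZero k]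

/-- A bad extension is determined by a repetitively coloured path `L` and by its values off the
second half of `L`, since that half repeats the colours of the first. -/
theorem extensions_sdiff_subset {S : Finset V} {v : V} (hv : v ∈ S) :
    G.extensions k S v \ G.nonrepColouringsOn k S ⊆
      (range (Fintype.card V + 1)).biUnion fun t => (G.repetitionCandidates S v t).biUnion
        fun L => (G.nonrepColouringsOn k (S \ (L.drop t).toFinset)).image (· ∘ halfShift t L) := by
  intro f hf
  obtain ⟨hfext, hfS⟩ := mem_sdiff.mp hf
  obtain ⟨hf0, hfS'⟩ := mem_extensions hv hfext
  obtain ⟨L, l, hchain, hnd, hLS, hl, hrep, hvL⟩ := exists_repetition_mem_drop hfS'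
    fun h => hfS (mem_nonrepColouringsOn.mpr ⟨hf0, h⟩)
  have hlen : L.length = 2 * l.length := by simpa [two_mul] using congrArg List.length hrep
  refine mem_biUnion.mpr ⟨l.length, mem_range.mpr (by have := hnd.length_le_card; omega),
    mem_biUnion.mpr ⟨L, mem_repetitionCandidates.mpr ⟨?_, hnd, hLS, hvL⟩, mem_image.mpr
      ⟨_, piecewise_zero_mem_nonrepColouringsOn (List.mem_toFinset.mpr hvL) hf0 hfS',
        piecewise_comp_halfShift hnd hrep _⟩⟩⟩
  rw [← hlen]
  exact mem_adjChainsThrough hchain (List.mem_of_mem_drop hvL)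

end Extensions

section Counting

variable {V : Type*} [Fintype V] [DecidableEq V] {G : SimpleGraph V} [G.LocallyFinite]

theorem mul_card_nonrepColouringsOn_erase_le (hd : ∀ v, G.degree v ≤ 3) {S : Finset V} {v : V}
    (hv : v ∈ S)
    (ih : ∀ U ⊆ S.erase v, 81 ^ (#(S.erase v) - #U) * #(G.nonrepColouringsOn 108 U) ≤
      #(G.nonrepColouringsOn 108 (S.erase v))) :
    81 * #(G.nonrepColouringsOn 108 (S.erase v)) ≤ #(G.nonrepColouringsOn 108 S) := by
  have hbad : #(G.extensions 108 S v \ G.nonrepColouringsOn 108 S) ≤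
      27 * #(G.nonrepColouringsOn 108 (S.erase v)) := by
    refine (card_le_card (extensions_sdiff_subset hv)).trans <| card_biUnion_le.trans <|
      (sum_le_sum fun t _ => card_biUnion_le.trans <| sum_le_sum fun L _ => card_image_le).trans ?_
    refine sum_le_of_pow_mul_le _ _ _ fun t => pow_mul_sum_le_of_card_le _ _ _ _ ?_ fun L hL => ?_
    · exact card_repetitionCandidates_le hd S v t
    · obtain ⟨hsub, hcard⟩ := sdiff_subset_erase_of_mem_repetitionCandidates hL
      simpa [hcard] using ih _ hsub
  have := card_le_card_sdiff_add_card (s := G.extensions 108 S v) (t := G.nonrepColouringsOn 108 S)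
  rw [card_extensions] at this
  omega

theorem pow_mul_card_nonrepColouringsOn_le (hd : ∀ v, G.degree v ≤ 3) (S : Finset V) :
    ∀ U ⊆ S, 81 ^ (#S - #U) * #(G.nonrepColouringsOn 108 U) ≤ #(G.nonrepColouringsOn 108 S) := by
  induction S using Finset.strongInduction with
  | H S ih =>
  intro U hUS
  rcases hUS.eq_or_ssubset with rfl | hUS
  · simp
  obtain ⟨v, hvS, hvU⟩ := exists_of_ssubset hUS
  have hUS' : U ⊆ S.erase v := fun x hx => mem_erase.mpr ⟨ne_of_mem_of_not_mem hx hvU, hUS.1 hx⟩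
  have hcard : #S - #U = #(S.erase v) - #U + 1 := by
    have := card_le_card hUS'
    rw [card_erase_of_mem hvS] at this ⊢
    have := card_lt_card hUS
    omega
  have ih' := ih _ (erase_ssubset hvS)
  calc 81 ^ (#S - #U) * #(G.nonrepColouringsOn 108 U)
      = 81 * (81 ^ (#(S.erase v) - #U) * #(G.nonrepColouringsOn 108 U)) := by
        rw [hcard, pow_succ]; ring
    _ ≤ 81 * #(G.nonrepColouringsOn 108 (S.erase v)) := Nat.mul_le_mul_left _ (ih' U hUS')
    _ ≤ #(G.nonrepColouringsOn 108 S) := mul_card_nonrepColouringsOn_erase_le hd hvS ih'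

theorem nonrepColouringsOn_nonempty (hd : ∀ v, G.degree v ≤ 3) (S : Finset V) :
    (G.nonrepColouringsOn 108 S).Nonempty := by
  have h := pow_mul_card_nonrepColouringsOn_le hd S ∅ (empty_subset S)
  have h0 : 0 < #(G.nonrepColouringsOn 108 ∅) :=
    card_pos.mpr ⟨0, zero_mem_nonrepColouringsOn_empty⟩
  exact card_pos.mp (h0.trans_le ((Nat.le_mul_of_pos_left _ (by positivity)).trans h))

end Counting

end SimpleGraph

theorem thue_cubic {V : Type} [Fintype V] (G : SimpleGraph V) [DecidableRel G.Adj]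
    (hcubic : ∀ v : V, G.degree v = 3) :
    thueNumber G ≤ 108 := by
  classical
  obtain ⟨f, hf⟩ := G.nonrepColouringsOn_nonempty (fun v => (hcubic v).le) univ
  exact Nat.sInf_le ⟨f, (mem_nonrepColouringsOn.mp hf).2.nonrepetitive⟩
end
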